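/- arXiv:math/0609269 — 3 statements merged into one kernel-verified Lean document; each statement's English description precedes it below -/
import Mathlib

section
/- For every integer m ≥ 0, the n^{2m+1} matrices X(i,r,j) := E(i) · F_r · (U_m E(j) U_mᴴ), indexed by i, j ∈ (Fin n)^m and r ∈ Fin n, satisfy τ( X(i,r,j) · X(i′,r′,j′)ᴴ ) = n^{−(2m+1)} if (i,r,j) = (i′,r′,j′), and = 0 otherwise; in particular these matrices are pairwise orthogonal with respect to the trace inner product and are linearly independent over ℂ. -/
open Matrix Kronecker

noncomputable section

/-- The primitive `n`-th root of unity `exp(2πi/n)`. -/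
def omega (n : ℕ) : ℂ := Complex.exp (2 * Real.pi * Complex.I / n)

/-- The diagonal matrix unit `e_i` with a `1` in entry `(i,i)`. -/
def eM (n : ℕ) (i : Fin n) : Matrix (Fin n) (Fin n) ℂ := Matrix.single i i 1

/-- The cyclic shift matrix `w`, with `w(a,b) = 1` iff `b = a + 1` (mod `n`). -/
def wM (n : ℕ) [NeZero n] : Matrix (Fin n) (Fin n) ℂ :=
  Matrix.of fun a b => if b = a + 1 then 1 else 0

/-- The spectral projections `f_k = (1/n) Σ_j ω^{-jk} w^j` of `w`. -/
def fM (n : ℕ) [NeZero n] (k : Fin n) : Matrix (Fin n) (Fin n) ℂ :=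
  ((n : ℂ))⁻¹ • ∑ j : Fin n, (omega n ^ ((j : ℕ) * (k : ℕ)))⁻¹ • wM n ^ (j : ℕ)

/-- The normalized trace of a square matrix: the trace divided by the size. -/
def nτ {ι : Type*} [Fintype ι] (A : Matrix ι ι ℂ) : ℂ :=
  Matrix.trace A / (Fintype.card ι)

/-- The `N`-fold elementary tensor `A_0 ⊗ ⋯ ⊗ A_{N-1}` of `n × n` matrices,
realized as a matrix indexed by functions `Fin N → Fin n`. -/
def tens (n N : ℕ) (A : Fin N → Matrix (Fin n) (Fin n) ℂ) :
    Matrix (Fin N → Fin n) (Fin N → Fin n) ℂ :=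
  Matrix.of fun x y => ∏ k, A k (x k) (y k)

/-- `u_s = 1^{⊗(s-1)} ⊗ v ⊗ 1^{⊗…}` where `v = Σ_i w^i ⊗ f_i` occupies factors
`s-1` and `s` of the `N`-fold tensor power. -/
def uM (n N : ℕ) [NeZero n] (s : ℕ) : Matrix (Fin N → Fin n) (Fin N → Fin n) ℂ :=
  ∑ i : Fin n, tens n N fun k =>
    if (k : ℕ) + 1 = s then wM n ^ (i : ℕ)
    else if (k : ℕ) = s then fM n i
    else 1

/-- `U_m = u_1 u_2 ⋯ u_m` inside the `N`-fold tensor power. -/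
def UM (n N m : ℕ) [NeZero n] : Matrix (Fin N → Fin n) (Fin N → Fin n) ℂ :=
  (((List.range m).map fun s => uM n N (s + 1))).prod

/-- `F_r = f_r ⊗ 1 ⊗ ⋯ ⊗ 1` inside the `N`-fold tensor power. -/
def FM (n N : ℕ) [NeZero n] (r : Fin n) : Matrix (Fin N → Fin n) (Fin N → Fin n) ℂ :=
  tens n N fun k => if (k : ℕ) = 0 then fM n r else 1

/-- `E(i) = e_{i_1} ⊗ ⋯ ⊗ e_{i_m} ⊗ 1 ⊗ ⋯ ⊗ 1` inside the `N`-fold tensor power,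
with the `e`'s occupying factors `0, …, m-1`. -/
def EM (n N m : ℕ) (i : Fin m → Fin n) : Matrix (Fin N → Fin n) (Fin N → Fin n) ℂ :=
  tens n N fun k => if h : (k : ℕ) < m then eM n (i ⟨(k : ℕ), h⟩) else 1

/-!
Since `U_m` is unitary and the `E(i)`, `F_r` are self-adjoint with `E(i) E(j) = δ_{ij} E(i)`,
`X(i,r,j) X(i',r',j')ᴴ` vanishes unless `j = j'`, and by cyclicity its trace then vanishes unless
`i = i'`. What remains is `tr (E(i) F_r U_m E(j) U_mᴴ F_{r'}) = δ_{rr'} n^{-m}`, proved by induction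
on `m` by peeling off tensor factor `0`: `U_{m+1} = u_1 (1 ⊗ U_m)` with `u_1 = Σ_p w^p ⊗ F_p`, the
induction hypothesis collapses the resulting double sum over `p, q` to its diagonal, and
`Σ_p tr (e_a f_r w^p e_b w^{-p} f_{r'}) = (f_r f_{r'})(a,a) = δ_{rr'}/n`. Orthogonality with nonzero
norms gives linear independence.
-/

open Fin.NatCast Fin.CommRing

section MatrixUnits

variable {n : ℕ}

theorem eM_mul_apply (i : Fin n) (A : Matrix (Fin n) (Fin n) ℂ) (a b : Fin n) :
    (eM n i * A) a b = if a = i then A i b else 0 := by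
  split_ifs with h
  · rw [h, eM, Matrix.single_mul_apply_same, one_mul]
  · exact Matrix.single_mul_apply_of_ne _ _ _ _ _ h _

theorem conjTranspose_eM (i : Fin n) : (eM n i)ᴴ = eM n i := by
  simp [eM, Matrix.conjTranspose_single]

theorem eM_mul_eM (i j : Fin n) : eM n i * eM n j = if i = j then eM n i else 0 := by
  split_ifs with h
  · rw [h, eM, Matrix.single_mul_single_same, one_mul]
  · exact Matrix.single_mul_single_of_ne _ _ _ _ h _

theorem trace_eM_mul_mul_eM_mul (a b : Fin n) (A B : Matrix (Fin n) (Fin n) ℂ) :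
    trace (eM n a * A * eM n b * B) = A a b * B b a := by
  rw [eM, eM, Matrix.single_mul_mul_single, Matrix.trace_single_mul, one_mul, mul_one,
    smul_eq_mul]

end MatrixUnits

section ConsKron

variable {R : Type*} [CommSemiring R] {α : Type*} {M : ℕ}

def consKron (A : Matrix α α R) (B : Matrix (Fin M → α) (Fin M → α) R) :
    Matrix (Fin (M + 1) → α) (Fin (M + 1) → α) R :=
  (A ⊗ₖ B).submatrix (Fin.consEquiv fun _ => α).symm (Fin.consEquiv fun _ => α).symm

theorem consKron_apply (A : Matrix α α R) (B : Matrix (Fin M → α) (Fin M → α) R)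
    (x y : Fin (M + 1) → α) :
    consKron A B x y = A (x 0) (y 0) * B (Fin.tail x) (Fin.tail y) := rfl

theorem consKron_mul [Fintype α] (A A' : Matrix α α R)
    (B B' : Matrix (Fin M → α) (Fin M → α) R) :
    consKron A B * consKron A' B' = consKron (A * A') (B * B') := by
  rw [consKron, consKron, Matrix.submatrix_mul_equiv, ← Matrix.mul_kronecker_mul, consKron]

theorem consKron_one [DecidableEq α] :
    consKron (1 : Matrix α α R) (1 : Matrix (Fin M → α) (Fin M → α) R) = 1 := by
  rw [consKron, Matrix.one_kronecker_one, Matrix.submatrix_one_equiv]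

theorem trace_consKron [Fintype α] (A : Matrix α α R)
    (B : Matrix (Fin M → α) (Fin M → α) R) :
    trace (consKron A B) = trace A * trace B := by
  rw [← Matrix.trace_kronecker]
  exact (Fin.consEquiv fun _ => α).symm.sum_comp fun p => (A ⊗ₖ B) p p

theorem conjTranspose_consKron [StarRing R] (A : Matrix α α R)
    (B : Matrix (Fin M → α) (Fin M → α) R) : (consKron A B)ᴴ = consKron Aᴴ Bᴴ := by
  rw [consKron, Matrix.conjTranspose_submatrix, Matrix.conjTranspose_kronecker, consKron]

theorem consKron_sum_left {ι : Type*} (s : Finset ι) (A : ι → Matrix α α R)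
    (B : Matrix (Fin M → α) (Fin M → α) R) :
    consKron (∑ i ∈ s, A i) B = ∑ i ∈ s, consKron (A i) B := by
  ext x y
  simp [consKron_apply, Matrix.sum_apply, Finset.sum_mul]

theorem consKron_sum_right {ι : Type*} (s : Finset ι) (A : Matrix α α R)
    (B : ι → Matrix (Fin M → α) (Fin M → α) R) :
    consKron A (∑ i ∈ s, B i) = ∑ i ∈ s, consKron A (B i) := by
  ext x y
  simp [consKron_apply, Matrix.sum_apply, Finset.mul_sum]

theorem consKron_zero_left (B : Matrix (Fin M → α) (Fin M → α) R) : consKron 0 B = 0 := by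
  ext x y
  simp [consKron_apply]

theorem consKron_zero_right (A : Matrix α α R) :
    consKron A (0 : Matrix (Fin M → α) (Fin M → α) R) = 0 := by
  ext x y
  simp [consKron_apply]

end ConsKron

section Tensor

variable {n : ℕ}

theorem tens_zero (A : Fin 0 → Matrix (Fin n) (Fin n) ℂ) : tens n 0 A = 1 := by
  ext x y
  simp [tens, Matrix.one_apply, Subsingleton.elim x y]

theorem tens_succ {N : ℕ} (A : Fin (N + 1) → Matrix (Fin n) (Fin n) ℂ) :
    tens n (N + 1) A = consKron (A 0) (tens n N fun k => A k.succ) := by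
  ext x y
  simp only [tens, consKron_apply, Matrix.of_apply, Fin.prod_univ_succ, Fin.tail]

theorem tens_mul {N : ℕ} (A B : Fin N → Matrix (Fin n) (Fin n) ℂ) :
    tens n N A * tens n N B = tens n N fun k => A k * B k := by
  induction N with
  | zero => simp only [tens_zero, one_mul]
  | succ N ih => rw [tens_succ, tens_succ, consKron_mul, ih, tens_succ]

theorem tens_one {N : ℕ} : tens n N (fun _ => 1) = 1 := by
  induction N with
  | zero => exact tens_zero _
  | succ N ih => rw [tens_succ, ih, consKron_one]

theorem conjTranspose_tens {N : ℕ} (A : Fin N → Matrix (Fin n) (Fin n) ℂ) :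
    (tens n N A)ᴴ = tens n N fun k => (A k)ᴴ := by
  ext x y
  simp [tens, Matrix.conjTranspose_apply]

theorem tens_eq_zero {N : ℕ} (A : Fin N → Matrix (Fin n) (Fin n) ℂ) (k : Fin N)
    (hk : A k = 0) : tens n N A = 0 := by
  ext x y
  exact Finset.prod_eq_zero (Finset.mem_univ k) (by simp [hk])

end Tensor

section Character

variable (n : ℕ) [NeZero n]

theorem omega_isPrimitiveRoot : IsPrimitiveRoot (omega n) n :=
  Complex.isPrimitiveRoot_exp n (NeZero.ne n)

theorem omega_pow_mod (k : ℕ) : omega n ^ (k % n) = omega n ^ k := by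
  conv_rhs => rw [← Nat.mod_add_div k n, pow_add, pow_mul,
    (omega_isPrimitiveRoot n).pow_eq_one, one_pow, mul_one]

def omegaChar : AddChar (Fin n) ℂ where
  toFun k := omega n ^ (k : ℕ)
  map_zero_eq_one' := by simp
  map_add_eq_mul' a b := by simp only [Fin.val_add, omega_pow_mod, pow_add]

theorem omegaChar_apply (k : Fin n) : omegaChar n k = omega n ^ (k : ℕ) := rfl

theorem omegaChar_mul (a b : Fin n) : omegaChar n (a * b) = omega n ^ ((a : ℕ) * (b : ℕ)) := by
  rw [omegaChar_apply, Fin.val_mul, omega_pow_mod]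

theorem omegaChar_isPrimitive : (omegaChar n).IsPrimitive := by
  intro a ha hone
  have h1 : omega n ^ (a : ℕ) = 1 := by
    simpa [omegaChar_apply] using DFunLike.congr_fun hone 1
  rw [(omega_isPrimitiveRoot n).pow_eq_one_iff_dvd] at h1
  exact ha (Fin.ext (Nat.eq_zero_of_dvd_of_lt h1 a.isLt))

theorem sum_omegaChar_mul (b : Fin n) :
    ∑ x : Fin n, omegaChar n (x * b) = if b = 0 then (n : ℂ) else 0 := by
  rw [AddChar.sum_mulShift b (omegaChar_isPrimitive n), Fintype.card_fin, Nat.cast_ite,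
    Nat.cast_zero]

end Character

section Shift

variable {n : ℕ} [NeZero n]

theorem wM_pow_apply (t : ℕ) (a b : Fin n) :
    (wM n ^ t) a b = if b = a + (t : Fin n) then 1 else 0 := by
  induction t generalizing b with
  | zero => simp [Matrix.one_apply, eq_comm]
  | succ t ih =>
    rw [pow_succ, Matrix.mul_apply]
    simp only [ih, ite_mul, one_mul, zero_mul, Finset.sum_ite_eq', Finset.mem_univ, if_true]
    simp [wM, add_assoc]

theorem wM_pow_mul_apply (t : ℕ) (A : Matrix (Fin n) (Fin n) ℂ) (a b : Fin n) :
    (wM n ^ t * A) a b = A (a + (t : Fin n)) b := by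
  simp [Matrix.mul_apply, wM_pow_apply]

theorem conjTranspose_wM_pow_mul_apply (t : ℕ) (A : Matrix (Fin n) (Fin n) ℂ) (a b : Fin n) :
    ((wM n ^ t)ᴴ * A) a b = A (a - (t : Fin n)) b := by
  rw [Matrix.mul_apply]
  simp [wM_pow_apply, ← sub_eq_iff_eq_add]

theorem conjTranspose_wM_pow_mul_self (t : ℕ) : (wM n ^ t)ᴴ * wM n ^ t = 1 := by
  ext a b
  rw [conjTranspose_wM_pow_mul_apply, wM_pow_apply, Matrix.one_apply]
  simp [eq_comm]

theorem wM_pow_mul_eM_mul_conjTranspose (t : ℕ) (j : Fin n) :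
    wM n ^ t * eM n j * (wM n ^ t)ᴴ = eM n (j - t) := by
  ext a b
  rw [mul_assoc, wM_pow_mul_apply, eM_mul_apply]
  simp only [Matrix.conjTranspose_apply, wM_pow_apply, eM, Matrix.single_apply,
    sub_eq_iff_eq_add, eq_comm (b := j), ite_and]
  split_ifs <;> simp

theorem fM_apply (r a b : Fin n) : fM n r a b = (n : ℂ)⁻¹ * omegaChar n ((a - b) * r) := by
  simp only [fM, Matrix.smul_apply, Matrix.sum_apply, wM_pow_apply, Fin.cast_val_eq_self,
    ← sub_eq_iff_eq_add', smul_eq_mul, mul_ite, mul_one, mul_zero, Finset.sum_ite_eq,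
    Finset.mem_univ, if_true]
  rw [← neg_sub b a, neg_mul, AddChar.map_neg_eq_inv, omegaChar_mul]

end Shift

section Projections

variable {n : ℕ} [NeZero n]

theorem conjTranspose_fM (r : Fin n) : (fM n r)ᴴ = fM n r := by
  ext a b
  rw [Matrix.conjTranspose_apply, fM_apply, fM_apply, star_mul', Complex.star_def,
    ← AddChar.map_neg_eq_conj, ← neg_mul, neg_sub]
  simp

theorem fM_apply_self (r a : Fin n) : fM n r a a = (n : ℂ)⁻¹ := by
  simp [fM_apply]

theorem fM_mul_fM (r r' : Fin n) : fM n r * fM n r' = if r = r' then fM n r else 0 := by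
  ext a b
  have hn : (n : ℂ) ≠ 0 := NeZero.ne _
  have hsplit : ∀ c : Fin n, fM n r a c * fM n r' c b =
        (n : ℂ)⁻¹ * (n : ℂ)⁻¹ * omegaChar n (a * r - b * r') * omegaChar n (c * (r' - r)) := by
    intro c
    rw [fM_apply, fM_apply, mul_mul_mul_comm, mul_assoc _ _ (omegaChar n _),
      ← AddChar.map_add_eq_mul, ← AddChar.map_add_eq_mul]
    ring_nf
  rw [Matrix.mul_apply, Finset.sum_congr rfl fun c _ => hsplit c, ← Finset.mul_sum,
    sum_omegaChar_mul]
  by_cases h : r = r'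
  · subst h
    rw [if_pos (sub_self r), if_pos rfl, fM_apply, ← sub_mul]
    field_simp
  · rw [if_neg (sub_ne_zero.2 (Ne.symm h)), if_neg h, mul_zero, Matrix.zero_apply]

theorem sum_fM : ∑ r : Fin n, fM n r = 1 := by
  ext a b
  have hn : (n : ℂ) ≠ 0 := NeZero.ne _
  simp only [Matrix.sum_apply, fM_apply, ← Finset.mul_sum, mul_comm (a - b), sum_omegaChar_mul,
    sub_eq_zero, Matrix.one_apply]
  split_ifs <;> simp [hn]

theorem trace_fM (r : Fin n) : trace (fM n r) = 1 := by
  simp [Matrix.trace, fM_apply_self, NeZero.ne]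

theorem sum_trace_eM_fM_wM_conj_fM (a b r r' : Fin n) :
    ∑ p : Fin n,
        trace (eM n a * fM n r * (wM n ^ (p : ℕ) * eM n b * (wM n ^ (p : ℕ))ᴴ) * fM n r')
      = if r = r' then (n : ℂ)⁻¹ else 0 := by
  simp only [wM_pow_mul_eM_mul_conjTranspose, Fin.cast_val_eq_self, trace_eM_mul_mul_eM_mul]
  rw [Fintype.sum_equiv (Equiv.subLeft b) (fun p => fM n r a (b - p) * fM n r' (b - p) a)
      (fun c => fM n r a c * fM n r' c a) fun _ => rfl,
    ← Matrix.mul_apply, fM_mul_fM]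
  split_ifs
  · exact fM_apply_self r a
  · rfl

end Projections

section DiagonalProjections

variable {n : ℕ}

theorem EM_zero (N : ℕ) (i : Fin 0 → Fin n) : EM n N 0 i = 1 := by
  rw [EM, ← tens_one (n := n) (N := N)]
  simp

theorem EM_succ (N m : ℕ) (i : Fin (m + 1) → Fin n) :
    EM n (N + 1) (m + 1) i = consKron (eM n (i 0)) (EM n N m (Fin.tail i)) := by
  rw [EM, tens_succ, EM]
  congr 2
  funext k
  simp only [Fin.val_succ, Nat.add_lt_add_iff_right]
  rfl

theorem conjTranspose_EM (N m : ℕ) (i : Fin m → Fin n) : (EM n N m i)ᴴ = EM n N m i := by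
  rw [EM, conjTranspose_tens]
  congr 1
  funext k
  split_ifs
  · exact conjTranspose_eM _
  · exact Matrix.conjTranspose_one

theorem EM_mul_EM {N m : ℕ} (hmN : m ≤ N) (i j : Fin m → Fin n) :
    EM n N m i * EM n N m j = if i = j then EM n N m i else 0 := by
  rw [EM, EM, tens_mul]
  split_ifs with h
  · subst h
    congr 1
    funext k
    split_ifs
    · rw [eM_mul_eM, if_pos rfl]
    · exact one_mul 1
  · obtain ⟨t, ht⟩ := Function.ne_iff.1 h
    refine tens_eq_zero _ (Fin.castLE hmN t) ?_
    simp [eM_mul_eM, ht]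

end DiagonalProjections

def XM (n m : ℕ) [NeZero n] (i : Fin m → Fin n) (r : Fin n) (j : Fin m → Fin n) :
    Matrix (Fin (m + 1) → Fin n) (Fin (m + 1) → Fin n) ℂ :=
  EM n (m + 1) m i * FM n (m + 1) r * (UM n (m + 1) m * EM n (m + 1) m j * (UM n (m + 1) m)ᴴ)

section TensorPower

variable {n : ℕ} [NeZero n]

theorem FM_succ (N : ℕ) (r : Fin n) : FM n (N + 1) r = consKron (fM n r) 1 := by
  rw [FM, tens_succ, ← tens_one (n := n) (N := N)]
  simp [Fin.val_succ]

theorem uM_one (N : ℕ) :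
    uM n (N + 1) 1 = ∑ p : Fin n, consKron (wM n ^ (p : ℕ)) (FM n N p) := by
  refine Finset.sum_congr rfl fun p _ => ?_
  rw [tens_succ, FM]
  congr 2
  funext k
  simp [Fin.val_succ]

theorem uM_add_two (N s : ℕ) : uM n (N + 1) (s + 2) = consKron 1 (uM n N (s + 1)) := by
  rw [uM, uM, consKron_sum_right]
  refine Finset.sum_congr rfl fun p _ => ?_
  rw [tens_succ]
  congr 2
  funext k
  simp [Fin.val_succ]

theorem UM_zero (N : ℕ) : UM n N 0 = 1 := rfl

theorem UM_succ (N m : ℕ) : UM n (N + 1) (m + 1) = uM n (N + 1) 1 * consKron 1 (UM n N m) := by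
  rw [UM, List.range_succ_eq_map, List.map_cons, List.prod_cons, List.map_map, UM]
  congr 1
  induction List.range m with
  | nil => exact consKron_one.symm
  | cons a l ih =>
    rw [List.map_cons, List.map_cons, List.prod_cons, List.prod_cons, ih, Function.comp_apply,
      uM_add_two, consKron_mul, one_mul]

theorem conjTranspose_FM (N : ℕ) (r : Fin n) : (FM n (N + 1) r)ᴴ = FM n (N + 1) r := by
  rw [FM_succ, conjTranspose_consKron, conjTranspose_fM, Matrix.conjTranspose_one]

theorem FM_mul_FM (N : ℕ) (p q : Fin n) :
    FM n (N + 1) p * FM n (N + 1) q = if p = q then FM n (N + 1) p else 0 := by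
  rw [FM_succ, FM_succ, consKron_mul, fM_mul_fM, one_mul]
  split_ifs
  · rfl
  · exact consKron_zero_left _

theorem sum_FM (N : ℕ) : ∑ p : Fin n, FM n (N + 1) p = 1 := by
  simp only [FM_succ, ← consKron_sum_left, sum_fM, consKron_one]

theorem conjTranspose_uM_one_mul_self (N : ℕ) : (uM n (N + 2) 1)ᴴ * uM n (N + 2) 1 = 1 := by
  simp only [uM_one, Matrix.conjTranspose_sum, conjTranspose_consKron, conjTranspose_FM,
    Finset.sum_mul_sum, consKron_mul, FM_mul_FM]
  have hdiag : ∀ p q : Fin n,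
      consKron ((wM n ^ (p : ℕ))ᴴ * wM n ^ (q : ℕ)) (if p = q then FM n (N + 1) p else 0) =
        if p = q then consKron 1 (FM n (N + 1) p) else 0 := by
    intro p q
    split_ifs with h
    · rw [h, conjTranspose_wM_pow_mul_self]
    · exact consKron_zero_right _
  simp only [hdiag, Finset.sum_ite_eq, Finset.mem_univ, if_true, ← consKron_sum_right, sum_FM,
    consKron_one]

theorem conjTranspose_UM_mul_self (m : ℕ) : (UM n (m + 1) m)ᴴ * UM n (m + 1) m = 1 := by
  induction m with
  | zero => rw [UM_zero, Matrix.conjTranspose_one, one_mul]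
  | succ m ih =>
    rw [UM_succ, Matrix.conjTranspose_mul, conjTranspose_consKron, Matrix.conjTranspose_one,
      mul_assoc, ← mul_assoc _ (uM n (m + 2) 1), conjTranspose_uM_one_mul_self, one_mul,
      consKron_mul, one_mul, ih, consKron_one]

theorem trace_EM_FM_UM_EM_UM_FM (m : ℕ) (i j : Fin m → Fin n) (r r' : Fin n) :
    trace (EM n (m + 1) m i * FM n (m + 1) r *
        (UM n (m + 1) m * EM n (m + 1) m j * (UM n (m + 1) m)ᴴ) * FM n (m + 1) r') =
      if r = r' then ((n : ℂ) ^ m)⁻¹ else 0 := by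
  induction m generalizing r r' with
  | zero =>
    simp only [EM_zero, UM_zero, Matrix.conjTranspose_one, one_mul, mul_one, FM_mul_FM]
    split_ifs
    · simp [FM_succ, trace_consKron, trace_fM]
    · exact Matrix.trace_zero _ _
  | succ m ih =>
    have expand : EM n (m + 2) (m + 1) i * FM n (m + 2) r *
          (UM n (m + 2) (m + 1) * EM n (m + 2) (m + 1) j * (UM n (m + 2) (m + 1))ᴴ) *
          FM n (m + 2) r' =
        ∑ q : Fin n, ∑ p : Fin n,
          consKron (eM n (i 0) * fM n r * (wM n ^ (p : ℕ) * eM n (j 0) * (wM n ^ (q : ℕ))ᴴ) *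
              fM n r')
            (EM n (m + 1) m (Fin.tail i) * FM n (m + 1) p *
              (UM n (m + 1) m * EM n (m + 1) m (Fin.tail j) * (UM n (m + 1) m)ᴴ) *
              FM n (m + 1) q) := by
      rw [EM_succ, EM_succ, FM_succ _ r, FM_succ _ r', UM_succ, uM_one]
      simp only [Matrix.conjTranspose_mul, Matrix.conjTranspose_sum, conjTranspose_consKron,
        conjTranspose_FM, Finset.sum_mul, Finset.mul_sum, consKron_mul, mul_one, mul_assoc]
    simp only [expand, Matrix.trace_sum, trace_consKron, ih, mul_ite, mul_zero, Finset.sum_ite_eq',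
      Finset.mem_univ, if_true]
    rw [← Finset.sum_mul, sum_trace_eM_fM_wM_conj_fM, ite_mul, zero_mul, pow_succ, mul_inv,
      mul_comm (n : ℂ)⁻¹]

theorem trace_XM_mul_conjTranspose_XM (m : ℕ) (i : Fin m → Fin n) (r : Fin n)
    (j i' : Fin m → Fin n) (r' : Fin n) (j' : Fin m → Fin n) :
    trace (XM n m i r j * (XM n m i' r' j')ᴴ) =
      if (i, r, j) = (i', r', j') then ((n : ℂ) ^ m)⁻¹ else 0 := by
  rw [XM, XM]
  set U := UM n (m + 1) m
  have hU : ∀ Z, Uᴴ * (U * Z) = Z := fun Z => by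
    rw [← mul_assoc, conjTranspose_UM_mul_self, one_mul]
  have hcycle : trace (EM n (m + 1) m i * FM n (m + 1) r * (U * EM n (m + 1) m j * Uᴴ) *
        (EM n (m + 1) m i' * FM n (m + 1) r' * (U * EM n (m + 1) m j' * Uᴴ))ᴴ) =
      trace (EM n (m + 1) m i' * EM n (m + 1) m i * FM n (m + 1) r *
        (U * (EM n (m + 1) m j * EM n (m + 1) m j') * Uᴴ) * FM n (m + 1) r') := by
    simp only [mul_assoc]
    rw [Matrix.trace_mul_comm (EM n (m + 1) m i')]
    simp only [Matrix.conjTranspose_mul, Matrix.conjTranspose_conjTranspose, conjTranspose_EM,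
      conjTranspose_FM, mul_assoc, hU]
  rw [hcycle, EM_mul_EM m.le_succ, EM_mul_EM m.le_succ]
  rcases eq_or_ne i' i with rfl | hi
  · rcases eq_or_ne j j' with rfl | hj
    · simp [trace_EM_FM_UM_EM_UM_FM, U]
    · simp [hj]
  · simp [hi, hi.symm]

end TensorPower

theorem linearIndependent_of_nτ_mul_conjTranspose {ι α : Type*} [Fintype ι] [DecidableEq ι]
    [Fintype α] {X : ι → Matrix α α ℂ} {c : ℂ} (hc : c ≠ 0)
    (h : ∀ p q, nτ (X p * (X q)ᴴ) = if p = q then c else 0) : LinearIndependent ℂ X := by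
  rw [Fintype.linearIndependent_iff]
  intro g hg q
  have hpair : nτ ((∑ p, g p • X p) * (X q)ᴴ) = ∑ p, g p * nτ (X p * (X q)ᴴ) := by
    simp only [nτ, Finset.sum_mul, smul_mul_assoc, Matrix.trace_sum, Matrix.trace_smul,
      smul_eq_mul, Finset.sum_div, mul_div_assoc]
  simp only [hg, h, Matrix.zero_mul, mul_ite, mul_zero, Finset.sum_ite_eq', Finset.mem_univ,
    if_true] at hpair
  rw [nτ, Matrix.trace_zero, zero_div, eq_comm, mul_eq_zero] at hpair
  exact hpair.resolve_right hc

theorem statement2_general (n : ℕ) [NeZero n] (m : ℕ) :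
    let X : (Fin m → Fin n) → Fin n → (Fin m → Fin n) →
        Matrix (Fin (m + 1) → Fin n) (Fin (m + 1) → Fin n) ℂ :=
      fun i r j => EM n (m + 1) m i * FM n (m + 1) r *
        (UM n (m + 1) m * EM n (m + 1) m j * (UM n (m + 1) m)ᴴ)
    (∀ (i : Fin m → Fin n) (r : Fin n) (j : Fin m → Fin n)
        (i' : Fin m → Fin n) (r' : Fin n) (j' : Fin m → Fin n),
        nτ (X i r j * (X i' r' j')ᴴ) =
          if (i, r, j) = (i', r', j') then ((n : ℂ) ^ (2 * m + 1))⁻¹ else 0) ∧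
      LinearIndependent ℂ
        (fun p : (Fin m → Fin n) × Fin n × (Fin m → Fin n) => X p.1 p.2.1 p.2.2) := by
  intro X
  have horth : ∀ p q : (Fin m → Fin n) × Fin n × (Fin m → Fin n),
      nτ (XM n m p.1 p.2.1 p.2.2 * (XM n m q.1 q.2.1 q.2.2)ᴴ) =
        if p = q then ((n : ℂ) ^ (2 * m + 1))⁻¹ else 0 := by
    rintro ⟨i, r, j⟩ ⟨i', r', j'⟩
    rw [nτ, trace_XM_mul_conjTranspose_XM, Fintype.card_fun, Fintype.card_fin, Fintype.card_fin]
    split_ifs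
    · rw [Nat.cast_pow, div_eq_mul_inv, ← mul_inv, ← pow_add, two_mul, add_assoc]
    · exact zero_div _
  exact ⟨fun i r j i' r' j' => horth (i, r, j) (i', r', j'),
    linearIndependent_of_nτ_mul_conjTranspose (by simp [NeZero.ne]) horth⟩

/-- the `n^{2m+1}` matrices `X(i,r,j) = E(i) F_r (U_m E(j) U_mᴴ)` form an
orthogonal family for the trace inner product, each of squared norm `n^{-(2m+1)}`; in
particular they are linearly independent over `ℂ`. -/
theorem statement2 (n : ℕ) [NeZero n] (hn : 2 ≤ n) (m : ℕ) :
    let X : (Fin m → Fin n) → Fin n → (Fin m → Fin n) →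
        Matrix (Fin (m + 1) → Fin n) (Fin (m + 1) → Fin n) ℂ :=
      fun i r j => EM n (m + 1) m i * FM n (m + 1) r *
        (UM n (m + 1) m * EM n (m + 1) m j * (UM n (m + 1) m)ᴴ)
    (∀ (i : Fin m → Fin n) (r : Fin n) (j : Fin m → Fin n)
        (i' : Fin m → Fin n) (r' : Fin n) (j' : Fin m → Fin n),
        nτ (X i r j * (X i' r' j')ᴴ) =
          if (i, r, j) = (i', r', j') then ((n : ℂ) ^ (2 * m + 1))⁻¹ else 0) ∧
      LinearIndependent ℂ
        (fun p : (Fin m → Fin n) × Fin n × (Fin m → Fin n) => X p.1 p.2.1 p.2.2) :=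
  statement2_general n m
end
end

section
/- For every integer m ≥ 1, the n^{2m} matrices Y(i,r,j) := Ē(i) · F_r · (U_{m−1} E′(j) U_{m−1}ᴴ), indexed by i ∈ (Fin n)^m, r ∈ Fin n and j ∈ (Fin n)^{m−1}, are nonzero and pairwise orthogonal with respect to the trace inner product ⟨X,Y⟩ = τ(X Yᴴ); consequently they form a ℂ-basis of M_n(ℂ)^{⊗m} (which has dimension n^{2m}). -/
open Matrix Kronecker

noncomputable section

set_option linter.unusedSectionVars false
set_option maxHeartbeats 1000000
namespace St3
variable (n : ℕ) [NeZero n]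

lemma omega_prim : IsPrimitiveRoot (omega n) n := by
  simpa [omega] using Complex.isPrimitiveRoot_exp n (NeZero.ne n)

lemma omega_pow_n : omega n ^ n = 1 := (omega_prim n).pow_eq_one

lemma omega_ne_zero : omega n ≠ 0 := (omega_prim n).ne_zero (NeZero.ne n)

lemma omega_pow_mod (t : ℕ) : omega n ^ (t % n) = omega n ^ t := by
  conv_rhs => rw [← Nat.div_add_mod t n]
  rw [pow_add, pow_mul, omega_pow_n, one_pow, one_mul]

def ec (z : ZMod n) : ℂ := omega n ^ z.val

lemma ec_natCast (t : ℕ) : ec n (t : ZMod n) = omega n ^ t := by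
  rw [ec, ZMod.val_natCast, omega_pow_mod]

lemma ec_zero : ec n 0 = 1 := by simp [ec]

lemma natCast_val (a : ZMod n) : ((a.val : ℕ) : ZMod n) = a :=
  ZMod.natCast_rightInverse a

lemma ec_add (a b : ZMod n) : ec n (a + b) = ec n a * ec n b := by
  have h : a + b = ((a.val + b.val : ℕ) : ZMod n) := by
    push_cast [natCast_val]; ring
  rw [h, ec_natCast, pow_add, ec, ec]

lemma ec_ne_zero (a : ZMod n) : ec n a ≠ 0 := pow_ne_zero _ (omega_ne_zero n)

lemma ec_mul_neg (a : ZMod n) : ec n a * ec n (-a) = 1 := by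
  rw [← ec_add, add_neg_cancel, ec_zero]

lemma ec_neg (a : ZMod n) : ec n (-a) = (ec n a)⁻¹ :=
  eq_inv_of_mul_eq_one_right (ec_mul_neg n a)

lemma star_omega : star (omega n) = (omega n)⁻¹ := by
  have h : (starRingEnd ℂ) (2 * Real.pi * Complex.I / n) = -(2 * Real.pi * Complex.I / n) := by
    simp [Complex.conj_I, map_ofNat]; ring
  show (starRingEnd ℂ) (omega n) = (omega n)⁻¹
  rw [omega, ← Complex.exp_conj, h, Complex.exp_neg]

lemma star_ec (a : ZMod n) : star (ec n a) = ec n (-a) := by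
  rw [ec, star_pow, star_omega, inv_pow, ec_neg, ec]

lemma ec_eq_one_iff (a : ZMod n) : ec n a = 1 ↔ a = 0 := by
  constructor
  · intro h
    have hd := ((omega_prim n).pow_eq_one_iff_dvd a.val).mp h
    exact (ZMod.val_eq_zero a).mp (Nat.eq_zero_of_dvd_of_lt hd (ZMod.val_lt a))
  · rintro rfl; exact ec_zero n

lemma ec_nsmul (c : ZMod n) (k : ℕ) : ec n (k • c) = ec n c ^ k := by
  induction k with
  | zero => simp [ec_zero]
  | succ k ih => rw [succ_nsmul, ec_add, ih, pow_succ]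

/-- cast `Fin n → ZMod n` -/
def fc (a : Fin n) : ZMod n := ((a : ℕ) : ZMod n)

/-- inverse cast -/
def fv (z : ZMod n) : Fin n := ⟨z.val, ZMod.val_lt z⟩

lemma fv_fc (a : Fin n) : fv n (fc n a) = a := by
  simp [fv, fc, ZMod.val_natCast_of_lt a.isLt, Fin.ext_iff]

lemma fc_fv (z : ZMod n) : fc n (fv n z) = z := natCast_val n z

/-- the equivalence `Fin n ≃ ZMod n` -/
def zE : Fin n ≃ ZMod n := ⟨fc n, fv n, fv_fc n, fc_fv n⟩

lemma fc_inj {a b : Fin n} (h : fc n a = fc n b) : a = b := by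
  have := congrArg (fv n) h; rwa [fv_fc, fv_fc] at this

lemma fc_add (a b : Fin n) : fc n (a + b) = fc n a + fc n b := by
  simp only [fc, Fin.val_add, ZMod.natCast_mod]; push_cast; ring

lemma sum_ec (c : ZMod n) : ∑ z : ZMod n, ec n (z * c) = if c = 0 then (n : ℂ) else 0 := by
  have key : ∀ z : ZMod n, ec n (z * c) = ec n c ^ z.val := by
    intro z; rw [← ec_nsmul, nsmul_eq_mul, natCast_val]
  simp_rw [key]
  have reidx : (∑ z : ZMod n, ec n c ^ z.val) = ∑ k ∈ Finset.range n, ec n c ^ k := by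
    rw [← Fin.sum_univ_eq_sum_range]
    refine (Fintype.sum_equiv (zE n) _ _ fun a => ?_).symm
    simp [zE, fc, ZMod.val_natCast_of_lt a.isLt]
  rw [reidx]
  by_cases h : c = 0
  · simp [h, ec_zero]
  · rw [if_neg h]
    have h1 : ec n c ≠ 1 := fun hh => h ((ec_eq_one_iff n c).mp hh)
    rw [geom_sum_eq h1]
    have hn : ec n c ^ n = 1 := by
      rw [ec, ← pow_mul, mul_comm, pow_mul, omega_pow_n, one_pow]
    rw [hn, sub_self, zero_div]

/-- main character-sum collapse over `Fin n` -/
lemma sum_fc (b s : ZMod n) :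
    ∑ a : Fin n, ec n (fc n a * b + s) = if b = 0 then (n : ℂ) * ec n s else 0 := by
  have : ∑ a : Fin n, ec n (fc n a * b + s) = (∑ z : ZMod n, ec n (z * b)) * ec n s := by
    calc ∑ a : Fin n, ec n (fc n a * b + s) = ∑ a : Fin n, ec n (fc n a * b) * ec n s :=
          Finset.sum_congr rfl fun a _ => ec_add n _ _
      _ = ∑ z : ZMod n, ec n (z * b) * ec n s :=
          Fintype.sum_equiv (zE n) _ _ (fun a => rfl)
      _ = (∑ z : ZMod n, ec n (z * b)) * ec n s := (Finset.sum_mul _ _ _).symm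
  rw [this, sum_ec]
  split <;> simp

lemma fc_one : fc n 1 = 1 := by
  simp [fc, Fin.val_one', ZMod.natCast_mod]

lemma fc_eq_iff (a b : Fin n) : a = b ↔ fc n a = fc n b :=
  ⟨fun h => h ▸ rfl, fc_inj n⟩

lemma fc_cond_iff (c : Fin n) (z : ZMod n) : fc n c = z ↔ c = fv n z := by
  constructor
  · intro h; rw [← h, fv_fc]
  · rintro rfl; exact fc_fv n z

end St3

namespace St3
open scoped Classical
variable (n : ℕ) [NeZero n]

lemma sum_collapse {α β : Type*} [Fintype α] [DecidableEq α] [Fintype β] (F : α → ℂ)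
    (g : β → α) (hg : Function.Injective g) (h0 : ∀ x, (∀ c, x ≠ g c) → F x = 0) :
    ∑ x, F x = ∑ c, F (g c) := by
  rw [← Finset.sum_image (f := F) (g := g) (fun c _ d _ h => hg h)]
  symm; apply Finset.sum_subset (Finset.subset_univ _)
  intro x _ hx
  refine h0 x fun c hc => hx (Finset.mem_image.mpr ⟨c, Finset.mem_univ _, hc.symm⟩)

lemma iteC {P Q : Prop} {dP : Decidable P} {dQ : Decidable Q} {a b : ℂ} (h : P ↔ Q) :
    (@ite ℂ P dP a b) = @ite ℂ Q dQ a b := by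
  have e : P = Q := propext h
  subst e
  rw [Subsingleton.elim dP dQ]

lemma prod_ind {m : ℕ} (P : Fin m → Prop) [DecidablePred P] :
    (∏ k : Fin m, if P k then (1:ℂ) else 0) = if ∀ k, P k then 1 else 0 := by
  rw [Finset.prod_boole]
  simp

lemma wM_pow_apply (t : ℕ) (a b : Fin n) :
    (wM n ^ t) a b = if fc n b = fc n a + (t : ZMod n) then 1 else 0 := by
  induction t generalizing a b with
  | zero =>
    simp only [pow_zero, Matrix.one_apply, Nat.cast_zero, add_zero]
    by_cases h : a = b
    · simp [h]
    · rw [if_neg h, if_neg (fun hh => h (fc_inj n hh.symm))]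
  | succ t ih =>
    rw [pow_succ, Matrix.mul_apply]
    have hw : ∀ c, wM n c b = if fc n b = fc n c + 1 then (1:ℂ) else 0 := by
      intro c
      show (if b = c + 1 then (1:ℂ) else 0) = _
      by_cases h : b = c + 1
      · rw [if_pos h, if_pos (by rw [h, fc_add, fc_one])]
      · rw [if_neg h, if_neg (fun hh => h ?_)]
        apply fc_inj n
        rw [hh, fc_add, fc_one]
    simp_rw [ih, hw]
    have key : ∀ c : Fin n,
        (if fc n c = fc n a + (t : ZMod n) then (1:ℂ) else 0) *
          (if fc n b = fc n c + 1 then 1 else 0) =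
        if c = fv n (fc n a + (t : ZMod n)) then
          (if fc n b = fc n c + 1 then (1:ℂ) else 0) else 0 := by
      intro c
      by_cases h : fc n c = fc n a + (t : ZMod n)
      · rw [if_pos h, one_mul, if_pos ((fc_cond_iff n c _).mp h)]
      · rw [if_neg h, zero_mul, if_neg (fun hh => h ((fc_cond_iff n c _).mpr hh))]
    simp_rw [key]
    rw [Finset.sum_ite_eq' Finset.univ (fv n (fc n a + (t:ZMod n)))
      (fun c => if fc n b = fc n c + 1 then (1:ℂ) else 0)]
    rw [if_pos (Finset.mem_univ _), fc_fv]
    push_cast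
    rw [add_assoc]

lemma fM_apply (k : Fin n) (a b : Fin n) :
    fM n k a b = (n:ℂ)⁻¹ * ec n ((fc n a - fc n b) * fc n k) := by
  rw [fM, Matrix.smul_apply, Matrix.sum_apply]
  simp_rw [Matrix.smul_apply, wM_pow_apply, smul_eq_mul, mul_ite, mul_one, mul_zero]
  have key : ∀ j : Fin n,
      (if fc n b = fc n a + ((j:ℕ) : ZMod n) then (omega n ^ ((j:ℕ) * (k:ℕ)))⁻¹ else 0) =
      if j = fv n (fc n b - fc n a) then ec n (-(fc n j * fc n k)) else 0 := by
    intro j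
    have h1 : (fc n b = fc n a + ((j:ℕ) : ZMod n)) ↔ (j = fv n (fc n b - fc n a)) := by
      rw [show ((j:ℕ) : ZMod n) = fc n j from rfl, ← fc_cond_iff]
      constructor
      · intro h; rw [h]; ring
      · intro h; rw [h]; ring
    have h2 : (omega n ^ ((j:ℕ) * (k:ℕ)))⁻¹ = ec n (-(fc n j * fc n k)) := by
      rw [ec_neg, ← ec_natCast]
      congr 1
      push_cast [fc]
      ring
    rw [h2]
    by_cases h : j = fv n (fc n b - fc n a)
    · rw [if_pos (h1.mpr h), if_pos h]
    · rw [if_neg (fun hh => h (h1.mp hh)), if_neg h]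
  simp_rw [key]
  rw [Finset.sum_ite_eq' Finset.univ _ (fun j => ec n (-(fc n j * fc n k)))]
  rw [if_pos (Finset.mem_univ _), fc_fv]
  congr 1
  ring

section TensorEntries
variable {m : ℕ}

lemma eM_apply (i a b : Fin n) : eM n i a b = if i = a ∧ i = b then 1 else 0 := by
  simp [eM, Matrix.single, Matrix.of_apply, and_comm]

lemma prod_split_two (f : Fin m → ℂ) (p q : Fin m) (hpq : p ≠ q) :
    ∏ k, f k = f p * f q * ∏ k ∈ (Finset.univ.erase p).erase q, f k := by
  rw [← Finset.mul_prod_erase Finset.univ f (Finset.mem_univ p),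
    ← Finset.mul_prod_erase (Finset.univ.erase p) f
      (Finset.mem_erase.mpr ⟨fun h => hpq h.symm, Finset.mem_univ q⟩)]
  ring

lemma EM_apply (p : ℕ) (j : Fin p → Fin n) (x y : Fin m → Fin n) :
    EM n m p j x y =
      if (x = y ∧ ∀ (k : Fin m) (h : (k:ℕ) < p), y k = j ⟨(k:ℕ), h⟩) then 1 else 0 := by
  have hfac : ∀ k : Fin m,
      (if h : (k:ℕ) < p then eM n (j ⟨(k:ℕ), h⟩) else 1) (x k) (y k) =
      if (x k = y k ∧ ∀ h : (k:ℕ) < p, y k = j ⟨(k:ℕ), h⟩) then 1 else 0 := by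
    intro k
    by_cases hk : (k:ℕ) < p
    · rw [dif_pos hk, eM_apply]
      have hiff : (j ⟨(k:ℕ), hk⟩ = x k ∧ j ⟨(k:ℕ), hk⟩ = y k) ↔
          (x k = y k ∧ ∀ h : (k:ℕ) < p, y k = j ⟨(k:ℕ), h⟩) := by
        constructor
        · rintro ⟨h1, h2⟩; exact ⟨h1.symm.trans h2, fun h => h2.symm⟩
        · rintro ⟨h1, h2⟩; exact ⟨((h2 hk).symm.trans h1.symm).symm ▸ rfl, (h2 hk).symm⟩
      by_cases h : j ⟨(k:ℕ), hk⟩ = x k ∧ j ⟨(k:ℕ), hk⟩ = y k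
      · rw [if_pos h, if_pos (hiff.mp h)]
      · rw [if_neg h, if_neg (fun hh => h (hiff.mpr hh))]
    · rw [dif_neg hk, Matrix.one_apply]
      by_cases h : x k = y k
      · rw [if_pos h, if_pos ⟨h, fun hh => absurd hh hk⟩]
      · rw [if_neg h, if_neg (fun hh => h hh.1)]
  show (∏ k : Fin m, (if h : (k:ℕ) < p then eM n (j ⟨(k:ℕ), h⟩) else 1) (x k) (y k)) = _
  simp_rw [hfac]
  rw [prod_ind]
  exact iteC ⟨fun h => ⟨funext fun k => (h k).1, fun k hk => (h k).2 hk⟩,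
    fun h k => ⟨congrFun h.1 k, fun hk => h.2 k hk⟩⟩

lemma FM_apply (hm : 0 < m) (r : Fin n) (x y : Fin m → Fin n) :
    FM n m r x y = fM n r (x ⟨0, hm⟩) (y ⟨0, hm⟩) *
      (if (∀ k : Fin m, k ≠ ⟨0, hm⟩ → x k = y k) then 1 else 0) := by
  set k0 : Fin m := ⟨0, hm⟩
  show (∏ k : Fin m, (if (k:ℕ) = 0 then fM n r else 1) (x k) (y k)) = _
  rw [← Finset.mul_prod_erase Finset.univ _ (Finset.mem_univ k0)]
  have h1 : (if ((k0 : Fin m):ℕ) = 0 then fM n r else 1) (x k0) (y k0)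
      = fM n r (x k0) (y k0) := by
    norm_num [k0]
  have hfac : ∀ k ∈ Finset.univ.erase k0,
      (if (k:ℕ) = 0 then fM n r else 1) (x k) (y k) = if x k = y k then 1 else 0 := by
    intro k hk
    have : (k:ℕ) ≠ 0 := by
      intro h
      exact (Finset.mem_erase.mp hk).1 (Fin.ext h)
    rw [if_neg this, Matrix.one_apply]
  rw [h1, Finset.prod_congr rfl hfac, Finset.prod_boole]
  have hiff : (∀ k ∈ Finset.univ.erase k0, x k = y k) ↔
      (∀ k : Fin m, k ≠ k0 → x k = y k) := by
    constructor
    · intro h k hk; exact h k (Finset.mem_erase.mpr ⟨hk, Finset.mem_univ k⟩)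
    · intro h k hk; exact h k (Finset.mem_erase.mp hk).1
  exact congrArg _ (iteC hiff)

lemma uM_apply (p : ℕ) (hp : p + 1 < m) (x y : Fin m → Fin n) :
    uM n m (p+1) x y = (n:ℂ)⁻¹ *
      ec n ((fc n (x ⟨p+1, hp⟩) - fc n (y ⟨p+1, hp⟩)) *
        (fc n (y ⟨p, Nat.lt_of_succ_lt hp⟩) - fc n (x ⟨p, Nat.lt_of_succ_lt hp⟩))) *
      (if (∀ k : Fin m, k ≠ ⟨p, Nat.lt_of_succ_lt hp⟩ → k ≠ ⟨p+1, hp⟩ → x k = y k)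
        then 1 else 0) := by
  set kp : Fin m := ⟨p, Nat.lt_of_succ_lt hp⟩
  set kq : Fin m := ⟨p+1, hp⟩
  have hpq : kp ≠ kq := by simp [kp, kq, Fin.ext_iff]
  rw [uM, Matrix.sum_apply]
  have hterm : ∀ i : Fin n,
      tens n m (fun k => if (k:ℕ)+1 = p+1 then wM n ^ (i:ℕ) else
        if (k:ℕ) = p+1 then fM n i else 1) x y =
      ((if fc n (y kp) = fc n (x kp) + fc n i then (1:ℂ) else 0) *
        ((n:ℂ)⁻¹ * ec n ((fc n (x kq) - fc n (y kq)) * fc n i))) *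
      (if (∀ k : Fin m, k ≠ kp → k ≠ kq → x k = y k) then 1 else 0) := by
    intro i
    show (∏ k : Fin m, (if (k:ℕ)+1 = p+1 then wM n ^ (i:ℕ) else
        if (k:ℕ) = p+1 then fM n i else 1) (x k) (y k)) = _
    rw [prod_split_two _ kp kq hpq]
    congr 1
    · congr 1
      · rw [if_pos (by simp [kp]), wM_pow_apply]
        rfl
      · rw [if_neg (by simp [kq]), if_pos (by simp [kq]), fM_apply]
    · have hfac : ∀ k ∈ (Finset.univ.erase kp).erase kq,
          (if (k:ℕ)+1 = p+1 then wM n ^ (i:ℕ) else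
            if (k:ℕ) = p+1 then fM n i else 1) (x k) (y k) = if x k = y k then 1 else 0 := by
        intro k hk
        have hk1 := (Finset.mem_erase.mp hk).1
        have hk2 := (Finset.mem_erase.mp (Finset.mem_erase.mp hk).2).1
        rw [if_neg (fun h => hk2 (Fin.ext (Nat.succ_injective h))),
          if_neg (fun h => hk1 (Fin.ext h)), Matrix.one_apply]
      rw [Finset.prod_congr rfl hfac, Finset.prod_boole]
      have hiff : (∀ k ∈ (Finset.univ.erase kp).erase kq, x k = y k) ↔
          (∀ k : Fin m, k ≠ kp → k ≠ kq → x k = y k) := by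
        constructor
        · intro h k h1 h2
          exact h k (Finset.mem_erase.mpr ⟨h2, Finset.mem_erase.mpr ⟨h1, Finset.mem_univ k⟩⟩)
        · intro h k hk
          exact h k (Finset.mem_erase.mp (Finset.mem_erase.mp hk).2).1
            (Finset.mem_erase.mp hk).1
      exact iteC hiff
  simp_rw [hterm]
  rw [← Finset.sum_mul]
  congr 1
  have key : ∀ i : Fin n,
      (if fc n (y kp) = fc n (x kp) + fc n i then (1:ℂ) else 0) *
        ((n:ℂ)⁻¹ * ec n ((fc n (x kq) - fc n (y kq)) * fc n i)) =
      if i = fv n (fc n (y kp) - fc n (x kp)) then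
        (n:ℂ)⁻¹ * ec n ((fc n (x kq) - fc n (y kq)) * fc n i) else 0 := by
    intro i
    have hiff : (fc n (y kp) = fc n (x kp) + fc n i) ↔ i = fv n (fc n (y kp) - fc n (x kp)) := by
      rw [← fc_cond_iff]
      constructor
      · intro h; rw [h]; ring
      · intro h; rw [h]; ring
    by_cases h : fc n (y kp) = fc n (x kp) + fc n i
    · rw [if_pos h, one_mul, if_pos (hiff.mp h)]
    · rw [if_neg h, zero_mul, if_neg (fun hh => h (hiff.mpr hh))]
  simp_rw [key]
  rw [Finset.sum_ite_eq' Finset.univ _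
    (fun i => (n:ℂ)⁻¹ * ec n ((fc n (x kq) - fc n (y kq)) * fc n i)), if_pos (Finset.mem_univ _),
    fc_fv]

lemma UM_zero (N : ℕ) : UM n N 0 = 1 := by simp [UM]

lemma UM_succ (N M : ℕ) : UM n N (M+1) = UM n N M * uM n N (M+1) := by
  rw [UM, UM, List.range_succ, List.map_append, List.prod_append]
  simp

end TensorEntries

/-- `izf x k` is `fc (x k)` for `k < m`, else `0`. -/
def izf (n m : ℕ) [NeZero n] (x : Fin m → Fin n) (k : ℕ) : ZMod n :=
  if h : k < m then fc n (x ⟨k, h⟩) else 0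

/-- the recursively defined exponent sequence -/
def Dseq (n : ℕ) [NeZero n] (m : ℕ) (r : Fin n) (i y : Fin m → Fin n) : ℕ → ZMod n
  | 0 => fc n r
  | t+1 => izf n m y (2*t+1) - izf n m i (2*t+1) - Dseq n m r i y t

/-- the closed form for `vecMul ψ (UM n m M)` -/
def Hform (n : ℕ) [NeZero n] (m : ℕ) (r : Fin n) (i : Fin m → Fin n) (M : ℕ)
    (y : Fin m → Fin n) : ℂ :=
  ((n:ℂ)⁻¹)^(M/2+1) *
    ec n (∑ t ∈ Finset.range (M/2+1),
      (izf n m i (2*t) - izf n m y (2*t)) * Dseq n m r i y t) *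
    (if (M % 2 = 1 → izf n m y M = izf n m i M + Dseq n m r i y (M/2)) then 1 else 0) *
    (if (∀ k : Fin m, M < (k:ℕ) → y k = i k) then 1 else 0)

section Core
variable {m : ℕ}

lemma izf_lt (x : Fin m → Fin n) (k : ℕ) (h : k < m) :
    izf n m x k = fc n (x ⟨k, h⟩) := dif_pos h

lemma Dseq_zero (r : Fin n) (i y : Fin m → Fin n) : Dseq n m r i y 0 = fc n r := rfl

lemma Dseq_succ (r : Fin n) (i y : Fin m → Fin n) (t : ℕ) :
    Dseq n m r i y (t+1) = izf n m y (2*t+1) - izf n m i (2*t+1) - Dseq n m r i y t := rfl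

lemma Dseq_congr (r : Fin n) (i y y' : Fin m → Fin n) (t : ℕ)
    (h : ∀ s, s < t → izf n m y (2*s+1) = izf n m y' (2*s+1)) :
    Dseq n m r i y t = Dseq n m r i y' t := by
  induction t with
  | zero => rfl
  | succ t ih =>
    rw [Dseq_succ, Dseq_succ, h t (Nat.lt_succ_self t),
      ih (fun s hs => h s (hs.trans (Nat.lt_succ_self t)))]

lemma H_step (r : Fin n) (i : Fin m → Fin n) (M : ℕ) (hM1 : M + 1 < m) :
    vecMul (Hform n m r i M) (uM n m (M+1)) = Hform n m r i (M+1) := by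
  have hM : M < m := Nat.lt_of_succ_lt hM1
  have hn0 : (n:ℂ) ≠ 0 := Nat.cast_ne_zero.mpr (NeZero.ne n)
  funext y
  set kp : Fin m := ⟨M, Nat.lt_of_succ_lt hM1⟩ with hkp
  set kq : Fin m := ⟨M+1, hM1⟩ with hkq
  have hkpv : ((kp : Fin m) : ℕ) = M := rfl
  have hkqv : ((kq : Fin m) : ℕ) = M+1 := rfl
  have step1 : ∀ x : Fin m → Fin n, uM n m (M+1) x y =
      (n:ℂ)⁻¹ * ec n ((fc n (x kq) - fc n (y kq)) * (fc n (y kp) - fc n (x kp))) *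
      (if (∀ k : Fin m, k ≠ kp → k ≠ kq → x k = y k) then 1 else 0) :=
    fun x => uM_apply n M hM1 x y
  have hfyq : fc n (y kq) = izf n m y (M+1) := (izf_lt n _ _ hM1).symm
  have hfyp : fc n (y kp) = izf n m y M := (izf_lt n _ _ hM).symm
  have hfiq : fc n (i kq) = izf n m i (M+1) := (izf_lt n _ _ hM1).symm
  show ∑ x : Fin m → Fin n, Hform n m r i M x * uM n m (M+1) x y = _
  rcases Nat.even_or_odd M with hpar | hpar
  · -- M even
    have he : M % 2 = 0 := Nat.even_iff.mp hpar
    set T := M / 2 with hT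
    have hM2 : 2 * T = M := by omega
    set xh : Fin n → (Fin m → Fin n) := fun c k =>
      if (k:ℕ) < M then y k else if (k:ℕ) = M then c else i k with hxh
    have hxhp : ∀ c, xh c kp = c := by
      intro c; show (if M < M then y kp else if M = M then c else i kp) = c
      rw [if_neg (lt_irrefl M), if_pos rfl]
    have hxhq : ∀ c, xh c kq = i kq := by
      intro c; show (if M+1 < M then y kq else if M+1 = M then c else i kq) = i kq
      rw [if_neg (by omega), if_neg (by omega)]
    have hxhlt : ∀ c (k : Fin m), (k:ℕ) < M → xh c k = y k := by
      intro c k hk; show (if (k:ℕ) < M then y k else _) = y k; rw [if_pos hk]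
    have hxhgt : ∀ c (k : Fin m), M < (k:ℕ) → xh c k = i k := by
      intro c k hk
      show (if (k:ℕ) < M then y k else if (k:ℕ) = M then c else i k) = i k
      rw [if_neg (by omega), if_neg (by omega)]
    have hinj : Function.Injective xh := by
      intro c d h; have := congrFun h kp; rwa [hxhp, hxhp] at this
    have h0 : ∀ x : Fin m → Fin n, (∀ c, x ≠ xh c) →
        Hform n m r i M x *
          ((n:ℂ)⁻¹ * ec n ((fc n (x kq) - fc n (y kq)) * (fc n (y kp) - fc n (x kp))) *
          (if (∀ k : Fin m, k ≠ kp → k ≠ kq → x k = y k) then 1 else 0)) = 0 := by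
      intro x hx
      by_cases h1 : ∀ k : Fin m, M < (k:ℕ) → x k = i k
      · by_cases h2 : ∀ k : Fin m, k ≠ kp → k ≠ kq → x k = y k
        · exfalso
          apply hx (x kp)
          funext k
          rcases lt_trichotomy ((k:ℕ)) M with hk | hk | hk
          · rw [hxhlt _ k hk]
            exact h2 k (fun h => by rw [h, hkpv] at hk; omega)
              (fun h => by rw [h, hkqv] at hk; omega)
          · have hkk : k = kp := Fin.ext hk
            rw [hkk, hxhp]
          · rw [hxhgt _ k hk]; exact h1 k hk
        · rw [if_neg h2]; ring
      · rw [Hform, if_neg h1]; ring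
    have hDc : ∀ c, ∀ t ≤ T, Dseq n m r i (xh c) t = Dseq n m r i y t := by
      intro c t ht
      apply Dseq_congr
      intro s hs
      have h1 : 2*s+1 < M := by omega
      rw [izf_lt n _ _ (h1.trans hM), izf_lt n _ _ (h1.trans hM), hxhlt c _ h1]
    have hizflt : ∀ c, ∀ u, u < M → izf n m (xh c) u = izf n m y u := by
      intro c u hu
      rw [izf_lt n _ _ (hu.trans hM), izf_lt n _ _ (hu.trans hM), hxhlt c _ hu]
    have hizfM : ∀ c, izf n m (xh c) M = fc n c := by
      intro c
      rw [izf_lt n _ _ hM]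
      exact congrArg _ (hxhp c)
    set A : ZMod n := ∑ t ∈ Finset.range T,
      (izf n m i (2*t) - izf n m y (2*t)) * Dseq n m r i y t with hA
    set DT : ZMod n := Dseq n m r i y T with hDT
    set B : ZMod n := -DT - (izf n m i (M+1) - izf n m y (M+1)) with hB
    set S : ZMod n := A + izf n m i M * DT +
      (izf n m i (M+1) - izf n m y (M+1)) * izf n m y M with hS
    have key : ∀ c : Fin n,
        Hform n m r i M (xh c) *
          ((n:ℂ)⁻¹ * ec n ((fc n (xh c kq) - fc n (y kq)) * (fc n (y kp) - fc n (xh c kp))) *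
          (if (∀ k : Fin m, k ≠ kp → k ≠ kq → xh c k = y k) then 1 else 0)) =
        (((n:ℂ)⁻¹)^(T+1) * (n:ℂ)⁻¹) * ec n (fc n c * B + S) *
          (if (∀ k : Fin m, M+1 < (k:ℕ) → y k = i k) then 1 else 0) := by
      intro c
      rw [Hform, ← hT]
      rw [if_pos (fun hh => absurd hh (by omega))]
      rw [if_pos (fun k hk => hxhgt c k hk)]
      have hphase : ∑ t ∈ Finset.range (T+1),
          (izf n m i (2*t) - izf n m (xh c) (2*t)) * Dseq n m r i (xh c) t =
          A + (izf n m i M - fc n c) * DT := by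
        rw [Finset.sum_range_succ]
        congr 1
        · rw [hA]
          apply Finset.sum_congr rfl
          intro t ht
          have ht' : t < T := Finset.mem_range.mp ht
          rw [hizflt c (2*t) (by omega), hDc c t (le_of_lt ht')]
        · rw [hM2, hizfM, hDc c T le_rfl, hDT]
      rw [hphase, hxhq, hfiq, hfyq, hfyp]
      have hcp : fc n (xh c kp) = fc n c := congrArg _ (hxhp c)
      rw [hcp]
      have hind : (if (∀ k : Fin m, k ≠ kp → k ≠ kq → xh c k = y k) then (1:ℂ) else 0) =
          (if (∀ k : Fin m, M+1 < (k:ℕ) → y k = i k) then 1 else 0) := by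
        apply iteC
        constructor
        · intro h k hk
          have hne1 : k ≠ kp := fun hh => by rw [hh, hkpv] at hk; omega
          have hne2 : k ≠ kq := fun hh => by rw [hh, hkqv] at hk; omega
          rw [← h k hne1 hne2, hxhgt c k (by omega)]
        · intro h k hk1 hk2
          rcases lt_trichotomy ((k:ℕ)) M with hk | hk | hk
          · exact hxhlt c k hk
          · exact absurd (Fin.ext hk : k = kp) hk1
          · have hk' : M + 1 < (k:ℕ) ∨ (k:ℕ) = M+1 := by omega
            rcases hk' with hk' | hk'
            · rw [hxhgt c k (by omega), (h k hk').symm]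
            · exact absurd (Fin.ext hk' : k = kq) hk2
      rw [hind]
      have hecs : ec n (A + (izf n m i M - fc n c) * DT) *
          ec n ((izf n m i (M+1) - izf n m y (M+1)) * (izf n m y M - fc n c)) =
          ec n (fc n c * B + S) := by
        rw [← ec_add]
        congr 1
        rw [hB, hS]
        ring
      rw [← hecs]
      ring
    calc ∑ x : Fin m → Fin n, Hform n m r i M x * uM n m (M+1) x y
        = ∑ x : Fin m → Fin n, Hform n m r i M x *
          ((n:ℂ)⁻¹ * ec n ((fc n (x kq) - fc n (y kq)) * (fc n (y kp) - fc n (x kp))) *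
          (if (∀ k : Fin m, k ≠ kp → k ≠ kq → x k = y k) then 1 else 0)) :=
        Finset.sum_congr rfl fun x _ => by rw [step1 x]
      _ = ∑ c : Fin n, Hform n m r i M (xh c) *
          ((n:ℂ)⁻¹ * ec n ((fc n (xh c kq) - fc n (y kq)) * (fc n (y kp) - fc n (xh c kp))) *
          (if (∀ k : Fin m, k ≠ kp → k ≠ kq → xh c k = y k) then 1 else 0)) :=
        sum_collapse _ xh hinj h0
      _ = ∑ c : Fin n, (((n:ℂ)⁻¹)^(T+1) * (n:ℂ)⁻¹) * ec n (fc n c * B + S) *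
          (if (∀ k : Fin m, M+1 < (k:ℕ) → y k = i k) then 1 else 0) :=
        Finset.sum_congr rfl fun c _ => key c
      _ = (((n:ℂ)⁻¹)^(T+1) * (n:ℂ)⁻¹) * (∑ c : Fin n, ec n (fc n c * B + S)) *
          (if (∀ k : Fin m, M+1 < (k:ℕ) → y k = i k) then 1 else 0) := by
        rw [← Finset.sum_mul, ← Finset.mul_sum]
      _ = Hform n m r i (M+1) y := ?_
    rw [sum_fc]
    rw [Hform]
    have e1 : (M+1)/2 = T := by omega
    rw [e1, ← hDT]
    have hmid : (if ((M+1) % 2 = 1 → izf n m y (M+1) = izf n m i (M+1) + DT)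
        then (1:ℂ) else 0) = (if B = 0 then 1 else 0) := by
      apply iteC
      rw [hB]
      constructor
      · intro h
        rw [h (by omega)]; ring
      · intro h _
        linear_combination h
    rw [hmid]
    by_cases hBz : B = 0
    · have hBz' : -DT - (izf n m i (M+1) - izf n m y (M+1)) = 0 := by
        rw [← hB]; exact hBz
      have hS2 : S = ∑ t ∈ Finset.range (T+1),
          (izf n m i (2*t) - izf n m y (2*t)) * Dseq n m r i y t := by
        rw [hS, Finset.sum_range_succ, hM2, ← hA, ← hDT]
        linear_combination (-(izf n m y M)) * hBz'
      rw [if_pos hBz, if_pos hBz, ← hS2, mul_one]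
      congr 1
      field_simp
    · rw [if_neg hBz, if_neg hBz]
      ring
  · -- M odd
    have ho : M % 2 = 1 := Nat.odd_iff.mp hpar
    set T := M / 2 with hT
    have hM2 : 2 * T + 1 = M := by omega
    set DT : ZMod n := Dseq n m r i y T with hDT
    set xh : Fin m → Fin n := fun k =>
      if (k:ℕ) < M then y k else if (k:ℕ) = M then fv n (izf n m i M + DT) else i k with hxh
    have hxhp : xh kp = fv n (izf n m i M + DT) := by
      show (if M < M then y kp else if M = M then _ else i kp) = _
      rw [if_neg (lt_irrefl M), if_pos rfl]
    have hxhq : xh kq = i kq := by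
      show (if M+1 < M then y kq else if M+1 = M then _ else i kq) = i kq
      rw [if_neg (by omega), if_neg (by omega)]
    have hxhlt : ∀ (k : Fin m), (k:ℕ) < M → xh k = y k := by
      intro k hk; show (if (k:ℕ) < M then y k else _) = y k; rw [if_pos hk]
    have hxhgt : ∀ (k : Fin m), M < (k:ℕ) → xh k = i k := by
      intro k hk
      show (if (k:ℕ) < M then y k else if (k:ℕ) = M then _ else i k) = i k
      rw [if_neg (by omega), if_neg (by omega)]
    have hDx : ∀ (x : Fin m → Fin n), (∀ (k : Fin m), (k:ℕ) < M → x k = y k) →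
        ∀ t, t ≤ T → Dseq n m r i x t = Dseq n m r i y t := by
      intro x hxy t ht
      apply Dseq_congr
      intro s hs
      have h1 : 2*s+1 < M := by omega
      rw [izf_lt n _ _ (h1.trans hM), izf_lt n _ _ (h1.trans hM), hxy _ h1]
    have hizfM : izf n m xh M = izf n m i M + DT := by
      rw [izf_lt n _ _ hM]
      rw [show (⟨M, hM⟩ : Fin m) = kp from rfl, hxhp, fc_fv]
    have h0 : ∀ x : Fin m → Fin n, x ≠ xh →
        Hform n m r i M x *
          ((n:ℂ)⁻¹ * ec n ((fc n (x kq) - fc n (y kq)) * (fc n (y kp) - fc n (x kp))) *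
          (if (∀ k : Fin m, k ≠ kp → k ≠ kq → x k = y k) then 1 else 0)) = 0 := by
      intro x hx
      by_cases h1 : ∀ k : Fin m, M < (k:ℕ) → x k = i k
      · by_cases h2 : ∀ k : Fin m, k ≠ kp → k ≠ kq → x k = y k
        · by_cases h3 : izf n m x M = izf n m i M + Dseq n m r i x T
          · exfalso
            apply hx
            funext k
            rcases lt_trichotomy ((k:ℕ)) M with hk | hk | hk
            · rw [hxhlt k hk]
              exact h2 k (fun h => by rw [h, hkpv] at hk; omega)
                (fun h => by rw [h, hkqv] at hk; omega)
            · have hkk : k = kp := Fin.ext hk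
              rw [hkk, hxhp]
              have hx2 : ∀ (k : Fin m), (k:ℕ) < M → x k = y k := by
                intro k' hk'
                exact h2 k' (fun h => by rw [h, hkpv] at hk'; omega)
                  (fun h => by rw [h, hkqv] at hk'; omega)
              have h4 : fc n (x kp) = izf n m i M + DT := by
                rw [← izf_lt n x M hM, h3, hDx x hx2 T le_rfl, hDT]
              rw [(fc_cond_iff n _ _).mp h4]
            · rw [hxhgt k hk]; exact h1 k hk
          · rw [Hform, ← hT, if_neg (fun himp => h3 (himp ho))]
            ring
        · rw [if_neg h2]; ring
      · rw [Hform, if_neg h1]; ring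
    calc ∑ x : Fin m → Fin n, Hform n m r i M x * uM n m (M+1) x y
        = ∑ x : Fin m → Fin n, Hform n m r i M x *
          ((n:ℂ)⁻¹ * ec n ((fc n (x kq) - fc n (y kq)) * (fc n (y kp) - fc n (x kp))) *
          (if (∀ k : Fin m, k ≠ kp → k ≠ kq → x k = y k) then 1 else 0)) :=
        Finset.sum_congr rfl fun x _ => by rw [step1 x]
      _ = Hform n m r i M xh *
          ((n:ℂ)⁻¹ * ec n ((fc n (xh kq) - fc n (y kq)) * (fc n (y kp) - fc n (xh kp))) *
          (if (∀ k : Fin m, k ≠ kp → k ≠ kq → xh k = y k) then 1 else 0)) :=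
        Fintype.sum_eq_single xh (fun x hx => h0 x hx)
      _ = Hform n m r i (M+1) y := ?_
    -- evaluate at the single point
    have hizflt : ∀ u, u < M → izf n m xh u = izf n m y u := by
      intro u hu
      rw [izf_lt n _ _ (hu.trans hM), izf_lt n _ _ (hu.trans hM), hxhlt _ hu]
    have hDxh : ∀ t, t ≤ T → Dseq n m r i xh t = Dseq n m r i y t :=
      hDx xh (fun k hk => hxhlt k hk)
    rw [Hform, ← hT]
    rw [if_pos (fun _ => by rw [hizfM, hDxh T le_rfl, hDT])]
    rw [if_pos (fun k hk => hxhgt k hk)]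
    have hphase : ∑ t ∈ Finset.range (T+1),
        (izf n m i (2*t) - izf n m xh (2*t)) * Dseq n m r i xh t =
        ∑ t ∈ Finset.range (T+1),
        (izf n m i (2*t) - izf n m y (2*t)) * Dseq n m r i y t := by
      apply Finset.sum_congr rfl
      intro t ht
      have ht' : t < T + 1 := Finset.mem_range.mp ht
      rw [hizflt (2*t) (by omega), hDxh t (by omega)]
    rw [hphase, hxhq, hfiq, hfyq, hfyp]
    have hcp : fc n (xh kp) = izf n m i M + DT := by
      rw [hxhp, fc_fv]
    rw [hcp]
    have hind : (if (∀ k : Fin m, k ≠ kp → k ≠ kq → xh k = y k) then (1:ℂ) else 0) =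
        (if (∀ k : Fin m, M+1 < (k:ℕ) → y k = i k) then 1 else 0) := by
      apply iteC
      constructor
      · intro h k hk
        have hne1 : k ≠ kp := fun hh => by rw [hh, hkpv] at hk; omega
        have hne2 : k ≠ kq := fun hh => by rw [hh, hkqv] at hk; omega
        rw [← h k hne1 hne2, hxhgt k (by omega)]
      · intro h k hk1 hk2
        rcases lt_trichotomy ((k:ℕ)) M with hk | hk | hk
        · exact hxhlt k hk
        · exact absurd (Fin.ext hk : k = kp) hk1
        · have hk' : M + 1 < (k:ℕ) ∨ (k:ℕ) = M+1 := by omega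
          rcases hk' with hk' | hk'
          · rw [hxhgt k (by omega), (h k hk').symm]
          · exact absurd (Fin.ext hk' : k = kq) hk2
    rw [hind]
    -- now the RHS
    rw [Hform]
    have e1 : (M+1)/2 = T+1 := by omega
    rw [e1]
    rw [if_pos (fun hh => absurd hh (by omega))]
    have hsum : ∑ t ∈ Finset.range (T+1+1),
        (izf n m i (2*t) - izf n m y (2*t)) * Dseq n m r i y t =
        (∑ t ∈ Finset.range (T+1),
          (izf n m i (2*t) - izf n m y (2*t)) * Dseq n m r i y t) +
        (izf n m i (M+1) - izf n m y (M+1)) * (izf n m y M - izf n m i M - DT) := by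
      rw [Finset.sum_range_succ, show 2*(T+1) = M+1 from by omega, Dseq_succ,
        show 2*T+1 = M from hM2, ← hDT]
    rw [hsum]
    have hecs : ec n ((∑ t ∈ Finset.range (T+1),
          (izf n m i (2*t) - izf n m y (2*t)) * Dseq n m r i y t) +
        (izf n m i (M+1) - izf n m y (M+1)) * (izf n m y M - izf n m i M - DT)) =
        ec n (∑ t ∈ Finset.range (T+1),
          (izf n m i (2*t) - izf n m y (2*t)) * Dseq n m r i y t) *
        ec n ((izf n m i (M+1) - izf n m y (M+1)) * (izf n m y M - (izf n m i M + DT))) := by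
      rw [← ec_add]
      congr 1
      ring
    rw [hecs, pow_succ]
    ring

lemma H_eq (r : Fin n) (i : Fin m → Fin n) (M : ℕ) (hM : M < m) :
    vecMul (Hform n m r i 0) (UM n m M) = Hform n m r i M := by
  induction M with
  | zero => rw [UM_zero, Matrix.vecMul_one]
  | succ M ih =>
    rw [UM_succ, ← Matrix.vecMul_vecMul, ih (Nat.lt_of_succ_lt hM), H_step n r i M hM]

lemma star_ind (P : Prop) [Decidable P] : star (if P then (1:ℂ) else 0) = if P then 1 else 0 := by
  split <;> simp

lemma uM_unitary (p : ℕ) (hp : p + 1 < m) :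
    (uM n m (p+1))ᴴ * uM n m (p+1) = 1 := by
  have hn0 : (n:ℂ) ≠ 0 := Nat.cast_ne_zero.mpr (NeZero.ne n)
  ext x y
  rw [Matrix.mul_apply]
  set kp : Fin m := ⟨p, Nat.lt_of_succ_lt hp⟩ with hkp
  set kq : Fin m := ⟨p+1, hp⟩ with hkq
  have hkpv : ((kp : Fin m) : ℕ) = p := rfl
  have hkqv : ((kq : Fin m) : ℕ) = p+1 := rfl
  have hpq : kp ≠ kq := by
    intro h
    have : p = p + 1 := congrArg Fin.val h
    omega
  have hterm : ∀ z : Fin m → Fin n,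
      (uM n m (p+1))ᴴ x z * uM n m (p+1) z y =
      ((n:ℂ)⁻¹ * (n:ℂ)⁻¹) *
        (ec n (-((fc n (z kq) - fc n (x kq)) * (fc n (x kp) - fc n (z kp)))) *
         ec n ((fc n (z kq) - fc n (y kq)) * (fc n (y kp) - fc n (z kp)))) *
        ((if (∀ k : Fin m, k ≠ kp → k ≠ kq → z k = x k) then 1 else 0) *
         (if (∀ k : Fin m, k ≠ kp → k ≠ kq → z k = y k) then 1 else 0)) := by
    intro z
    rw [Matrix.conjTranspose_apply, uM_apply n p hp z x, uM_apply n p hp z y]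
    rw [star_mul', star_mul', star_ind, star_ec, star_inv₀, star_natCast]
    ring
  simp_rw [hterm]
  set zh : Fin n × Fin n → (Fin m → Fin n) := fun ab k =>
    if k = kp then ab.1 else if k = kq then ab.2 else x k with hzh
  have hzhp : ∀ ab, zh ab kp = ab.1 := by
    intro ab; show (if kp = kp then _ else _) = _; rw [if_pos rfl]
  have hzhq : ∀ ab, zh ab kq = ab.2 := by
    intro ab; show (if kq = kp then _ else _) = _
    rw [if_neg (fun h => hpq h.symm), if_pos rfl]
  have hzho : ∀ ab (k : Fin m), k ≠ kp → k ≠ kq → zh ab k = x k := by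
    intro ab k h1 h2; show (if k = kp then _ else _) = _
    rw [if_neg h1, if_neg h2]
  have hinj : Function.Injective zh := by
    intro ab cd h
    have h1 := congrFun h kp
    have h2 := congrFun h kq
    rw [hzhp, hzhp] at h1
    rw [hzhq, hzhq] at h2
    exact Prod.ext h1 h2
  have h0 : ∀ z : Fin m → Fin n, (∀ ab, z ≠ zh ab) →
      ((n:ℂ)⁻¹ * (n:ℂ)⁻¹) *
        (ec n (-((fc n (z kq) - fc n (x kq)) * (fc n (x kp) - fc n (z kp)))) *
         ec n ((fc n (z kq) - fc n (y kq)) * (fc n (y kp) - fc n (z kp)))) *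
        ((if (∀ k : Fin m, k ≠ kp → k ≠ kq → z k = x k) then 1 else 0) *
         (if (∀ k : Fin m, k ≠ kp → k ≠ kq → z k = y k) then 1 else 0)) = 0 := by
    intro z hz
    by_cases h1 : ∀ k : Fin m, k ≠ kp → k ≠ kq → z k = x k
    · exfalso
      apply hz (z kp, z kq)
      funext k
      by_cases e1 : k = kp
      · rw [e1, hzhp]
      by_cases e2 : k = kq
      · rw [e2, hzhq]
      rw [hzho _ k e1 e2]
      exact h1 k e1 e2
    · rw [if_neg h1]; ring
  rw [sum_collapse _ zh hinj h0, Fintype.sum_prod_type]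
  by_cases hxy : ∀ k : Fin m, k ≠ kp → k ≠ kq → x k = y k
  · have key : ∀ a b : Fin n,
        ((n:ℂ)⁻¹ * (n:ℂ)⁻¹) *
          (ec n (-((fc n (zh (a,b) kq) - fc n (x kq)) * (fc n (x kp) - fc n (zh (a,b) kp)))) *
           ec n ((fc n (zh (a,b) kq) - fc n (y kq)) * (fc n (y kp) - fc n (zh (a,b) kp)))) *
          ((if (∀ k : Fin m, k ≠ kp → k ≠ kq → zh (a,b) k = x k) then 1 else 0) *
           (if (∀ k : Fin m, k ≠ kp → k ≠ kq → zh (a,b) k = y k) then 1 else 0)) =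
        ((n:ℂ)⁻¹ * (n:ℂ)⁻¹) *
          ec n (fc n b * (fc n (y kp) - fc n (x kp)) +
            (fc n (x kq) * (fc n (x kp) - fc n a) - fc n (y kq) * (fc n (y kp) - fc n a))) := by
      intro a b
      rw [hzhp, hzhq]
      rw [if_pos (fun k h1 h2 => hzho (a,b) k h1 h2)]
      rw [if_pos (fun k h1 h2 => (hzho (a,b) k h1 h2).trans (hxy k h1 h2))]
      rw [← ec_add]
      have : -((fc n b - fc n (x kq)) * (fc n (x kp) - fc n a)) +
          (fc n b - fc n (y kq)) * (fc n (y kp) - fc n a) =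
          fc n b * (fc n (y kp) - fc n (x kp)) +
            (fc n (x kq) * (fc n (x kp) - fc n a) - fc n (y kq) * (fc n (y kp) - fc n a)) := by
        ring
      rw [this]
      ring
    simp_rw [key]
    have hsumb : ∀ a : Fin n,
        ∑ b : Fin n, ((n:ℂ)⁻¹ * (n:ℂ)⁻¹) *
          ec n (fc n b * (fc n (y kp) - fc n (x kp)) +
            (fc n (x kq) * (fc n (x kp) - fc n a) - fc n (y kq) * (fc n (y kp) - fc n a))) =
        ((n:ℂ)⁻¹ * (n:ℂ)⁻¹) * (if fc n (y kp) - fc n (x kp) = 0 then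
          (n:ℂ) * ec n (fc n (x kq) * (fc n (x kp) - fc n a) -
            fc n (y kq) * (fc n (y kp) - fc n a)) else 0) := by
      intro a
      rw [← Finset.mul_sum, sum_fc]
    simp_rw [hsumb]
    by_cases hp0 : fc n (y kp) - fc n (x kp) = 0
    · have hxp : x kp = y kp := fc_inj n (by linear_combination -hp0)
      simp_rw [if_pos hp0]
      have key2 : ∀ a : Fin n,
          ((n:ℂ)⁻¹ * (n:ℂ)⁻¹) * ((n:ℂ) * ec n (fc n (x kq) * (fc n (x kp) - fc n a) -
            fc n (y kq) * (fc n (y kp) - fc n a))) =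
          ((n:ℂ)⁻¹ * (n:ℂ)⁻¹ * (n:ℂ)) *
            ec n (fc n a * (fc n (y kq) - fc n (x kq)) +
              (fc n (x kq) - fc n (y kq)) * fc n (x kp)) := by
        intro a
        have heq : fc n (x kq) * (fc n (x kp) - fc n a) - fc n (y kq) * (fc n (y kp) - fc n a) =
            fc n a * (fc n (y kq) - fc n (x kq)) +
              (fc n (x kq) - fc n (y kq)) * fc n (x kp) := by
          linear_combination (-(fc n (y kq))) * hp0
        rw [heq]; ring
      simp_rw [key2]
      rw [← Finset.mul_sum, sum_fc]
      by_cases hq0 : fc n (y kq) - fc n (x kq) = 0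
      · have hxq : x kq = y kq := fc_inj n (by linear_combination -hq0)
        rw [if_pos hq0]
        have hz : fc n (x kq) - fc n (y kq) = 0 := by linear_combination -hq0
        rw [hz, zero_mul, ec_zero]
        have hxyeq : x = y := by
          funext k
          by_cases e1 : k = kp
          · rw [e1, hxp]
          by_cases e2 : k = kq
          · rw [e2, hxq]
          exact hxy k e1 e2
        rw [Matrix.one_apply, if_pos hxyeq]
        field_simp
      · rw [if_neg hq0]
        have hxyne : x ≠ y := by
          intro h
          exact hq0 (by rw [h]; ring)
        rw [Matrix.one_apply, if_neg hxyne]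
        ring
    · simp_rw [if_neg hp0]
      have hxyne : x ≠ y := by
        intro h
        exact hp0 (by rw [h]; ring)
      rw [Matrix.one_apply, if_neg hxyne]
      simp
  · -- off-diagonal parts differ
    have key0 : ∀ a b : Fin n,
        ((n:ℂ)⁻¹ * (n:ℂ)⁻¹) *
          (ec n (-((fc n (zh (a,b) kq) - fc n (x kq)) * (fc n (x kp) - fc n (zh (a,b) kp)))) *
           ec n ((fc n (zh (a,b) kq) - fc n (y kq)) * (fc n (y kp) - fc n (zh (a,b) kp)))) *
          ((if (∀ k : Fin m, k ≠ kp → k ≠ kq → zh (a,b) k = x k) then 1 else 0) *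
           (if (∀ k : Fin m, k ≠ kp → k ≠ kq → zh (a,b) k = y k) then 1 else 0)) = 0 := by
      intro a b
      have : ¬ (∀ k : Fin m, k ≠ kp → k ≠ kq → zh (a,b) k = y k) := by
        intro h
        apply hxy
        intro k h1 h2
        rw [← hzho (a,b) k h1 h2]
        exact h k h1 h2
      rw [if_neg this]
      ring
    simp_rw [key0]
    have hxyne : x ≠ y := by
      intro h
      exact hxy (fun k _ _ => by rw [h])
    rw [Matrix.one_apply, if_neg hxyne]
    simp

lemma UM_unitary (M : ℕ) (hM : M < m) : (UM n m M)ᴴ * UM n m M = 1 := by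
  induction M with
  | zero => rw [UM_zero, Matrix.conjTranspose_one, one_mul]
  | succ M ih =>
    rw [UM_succ, Matrix.conjTranspose_mul]
    calc (uM n m (M+1))ᴴ * (UM n m M)ᴴ * (UM n m M * uM n m (M+1))
        = (uM n m (M+1))ᴴ * ((UM n m M)ᴴ * UM n m M) * uM n m (M+1) := by
          simp only [Matrix.mul_assoc]
      _ = (uM n m (M+1))ᴴ * uM n m (M+1) := by
          rw [ih (Nat.lt_of_succ_lt hM), Matrix.mul_one]
      _ = 1 := uM_unitary n M hM

lemma tr_conj {ι : Type*} [Fintype ι] (A B : Matrix ι ι ℂ) :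
    Matrix.trace (A * Bᴴ) = ∑ x, ∑ y, A x y * star (B x y) := by
  simp [Matrix.trace, Matrix.diag, Matrix.mul_apply, Matrix.conjTranspose_apply]

lemma FM_Hform (hm : 0 < m) (r : Fin n) (i z : Fin m → Fin n) :
    FM n m r i z = Hform n m r i 0 z := by
  rw [FM_apply n hm, Hform, fM_apply]
  rw [Finset.sum_range_one, Dseq_zero, pow_one]
  rw [if_pos (fun hh => absurd hh (by omega))]
  have h0 : izf n m i 0 = fc n (i ⟨0, hm⟩) := izf_lt n i 0 hm
  have h1 : izf n m z 0 = fc n (z ⟨0, hm⟩) := izf_lt n z 0 hm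
  rw [show 2 * 0 = 0 from rfl, h0, h1]
  have hiff : (∀ k : Fin m, k ≠ ⟨0, hm⟩ → i k = z k) ↔ (∀ k : Fin m, 0 < (k:ℕ) → z k = i k) := by
    constructor
    · intro h k hk
      refine (h k (fun hh => ?_)).symm
      rw [hh] at hk
      exact absurd hk (lt_irrefl 0)
    · intro h k hk
      have : 0 < (k:ℕ) := by
        rcases Nat.eq_zero_or_pos ((k:ℕ)) with h' | h'
        · exact absurd (Fin.ext h' : k = ⟨0, hm⟩) hk
        · exact h'
      exact (h k this).symm
  rw [iteC hiff]
  ring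

lemma EMFM_apply (hm : 0 < m) (i : Fin m → Fin n) (r : Fin n) (x z : Fin m → Fin n) :
    (EM n m m i * FM n m r) x z = (if x = i then 1 else 0) * Hform n m r i 0 z := by
  rw [Matrix.mul_apply]
  have hEM : ∀ w, EM n m m i x w = if (w = i ∧ x = i) then 1 else 0 := by
    intro w
    rw [EM_apply]
    apply iteC
    constructor
    · rintro ⟨h1, h2⟩
      have hw : w = i := funext fun k => by
        have := h2 k k.isLt
        rwa [Fin.eta] at this
      exact ⟨hw, h1.trans hw⟩
    · rintro ⟨h1, h2⟩
      refine ⟨h2.trans h1.symm, fun k hk => ?_⟩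
      subst h1
      exact congrArg w (Fin.eta k hk).symm
  simp_rw [hEM]
  have key : ∀ w, (if (w = i ∧ x = i) then (1:ℂ) else 0) * FM n m r w z =
      if w = i then (if x = i then (1:ℂ) else 0) * FM n m r i z else 0 := by
    intro w
    by_cases hw : w = i
    · rw [if_pos hw, hw]
      by_cases hx : x = i
      · rw [if_pos ⟨rfl, hx⟩, if_pos hx, one_mul]
      · rw [if_neg (fun hc => hx hc.2), if_neg hx, zero_mul]
    · rw [if_neg (fun hc => hw hc.1), if_neg hw, zero_mul]
  simp_rw [key]
  rw [Finset.sum_ite_eq' Finset.univ i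
    (fun _ => (if x = i then (1:ℂ) else 0) * FM n m r i z), if_pos (Finset.mem_univ _)]
  rw [FM_Hform n hm]

lemma vecMul_EM (p : ℕ) (j : Fin p → Fin n) (h : (Fin m → Fin n) → ℂ) (z : Fin m → Fin n) :
    vecMul h (EM n m p j) z =
      h z * (if (∀ (k : Fin m) (hk : (k:ℕ) < p), z k = j ⟨(k:ℕ), hk⟩) then 1 else 0) := by
  show ∑ w, h w * EM n m p j w z = _
  have key : ∀ w, h w * EM n m p j w z =
      if w = z then h z * (if (∀ (k : Fin m) (hk : (k:ℕ) < p), z k = j ⟨(k:ℕ), hk⟩)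
        then 1 else 0) else 0 := by
    intro w
    rw [EM_apply]
    by_cases hw : w = z
    · rw [if_pos hw, hw]
      by_cases hc : ∀ (k : Fin m) (hk : (k:ℕ) < p), z k = j ⟨(k:ℕ), hk⟩
      · rw [if_pos ⟨rfl, hc⟩, if_pos hc, mul_one]
      · rw [if_neg (fun hcc => hc hcc.2), if_neg hc, mul_zero]
    · rw [if_neg (fun hcc => hw hcc.1), if_neg hw, mul_zero]
  simp_rw [key]
  rw [Finset.sum_ite_eq' Finset.univ z, if_pos (Finset.mem_univ _)]

lemma pairing_cancel {ι : Type*} [Fintype ι] [DecidableEq ι] (U : Matrix ι ι ℂ)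
    (hU : Uᴴ * U = 1) (G G' : ι → ℂ) :
    ∑ y, vecMul G Uᴴ y * star (vecMul G' Uᴴ y) = ∑ a, G a * star (G' a) := by
  have expand : ∀ y, vecMul G Uᴴ y * star (vecMul G' Uᴴ y) =
      ∑ a, ∑ b, (G a * star (G' b)) * (Uᴴ a y * star (Uᴴ b y)) := by
    intro y
    rw [show vecMul G Uᴴ y = ∑ a, G a * Uᴴ a y from rfl,
      show vecMul G' Uᴴ y = ∑ b, G' b * Uᴴ b y from rfl, star_sum, Finset.sum_mul_sum]
    refine Finset.sum_congr rfl fun a _ => Finset.sum_congr rfl fun b _ => ?_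
    rw [star_mul']
    ring
  simp_rw [expand]
  rw [Finset.sum_comm]
  have swap2 : ∀ a, (∑ y : ι, ∑ b : ι, (G a * star (G' b)) * (Uᴴ a y * star (Uᴴ b y))) =
      ∑ b : ι, (G a * star (G' b)) * ∑ y : ι, Uᴴ a y * star (Uᴴ b y) := by
    intro a
    rw [Finset.sum_comm]
    exact Finset.sum_congr rfl fun b _ => by rw [← Finset.mul_sum]
  simp_rw [swap2]
  have inner : ∀ a b : ι, (∑ y : ι, Uᴴ a y * star (Uᴴ b y)) = if a = b then (1:ℂ) else 0 := by
    intro a b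
    have : (∑ y : ι, Uᴴ a y * star (Uᴴ b y)) = (Uᴴ * U) a b := by
      rw [Matrix.mul_apply]
      refine Finset.sum_congr rfl fun y _ => ?_
      rw [Matrix.conjTranspose_apply, Matrix.conjTranspose_apply, star_star]
    rw [this, hU, Matrix.one_apply]
  simp_rw [inner, mul_ite, mul_one, mul_zero]
  exact Finset.sum_congr rfl fun a _ => by
    rw [Finset.sum_ite_eq Finset.univ a, if_pos (Finset.mem_univ _)]

lemma sum_delta_pair (i i' : Fin m → Fin n) :
    ∑ x : Fin m → Fin n, (if x = i then (1:ℂ) else 0) * (if x = i' then 1 else 0) =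
    if i = i' then 1 else 0 := by
  have key : ∀ x, (if x = i then (1:ℂ) else 0) * (if x = i' then 1 else 0) =
      if x = i then (if i = i' then (1:ℂ) else 0) else 0 := by
    intro x
    by_cases hx : x = i
    · rw [if_pos hx, one_mul, if_pos hx, hx]
    · rw [if_neg hx, zero_mul, if_neg hx]
  simp_rw [key]
  rw [Finset.sum_ite_eq' Finset.univ i, if_pos (Finset.mem_univ _)]

lemma Dseq_inj (r r' : Fin n) (i y : Fin m → Fin n) (t : ℕ) :
    Dseq n m r i y t = Dseq n m r' i y t ↔ r = r' := by
  induction t with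
  | zero =>
    rw [Dseq_zero, Dseq_zero]
    exact (fc_eq_iff n r r').symm
  | succ t ih =>
    rw [Dseq_succ, Dseq_succ, sub_right_inj]
    exact ih


lemma final_pairing {M : ℕ} (r r' : Fin n) (i : Fin (M+1) → Fin n)
    (j j' : Fin M → Fin n) :
    (∑ z : Fin (M+1) → Fin n,
      (Hform n (M+1) r i M z *
        (if (∀ (k : Fin (M+1)) (hk : (k:ℕ) < M), z k = j ⟨(k:ℕ), hk⟩) then 1 else 0)) *
      star (Hform n (M+1) r' i M z *
        (if (∀ (k : Fin (M+1)) (hk : (k:ℕ) < M), z k = j' ⟨(k:ℕ), hk⟩) then 1 else 0))) =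
    if r = r' ∧ j = j' then ((n:ℂ)^(M+1))⁻¹ else 0 := by
  have hn0 : (n:ℂ) ≠ 0 := Nat.cast_ne_zero.mpr (NeZero.ne n)
  have hM : M < M + 1 := Nat.lt_succ_self M
  set kM : Fin (M+1) := ⟨M, hM⟩ with hkM
  by_cases hjj : j = j'
  swap
  · -- j ≠ j' : every term vanishes
    rw [if_neg (fun hc => hjj hc.2)]
    apply Finset.sum_eq_zero
    intro z _
    by_cases h1 : ∀ (k : Fin (M+1)) (hk : (k:ℕ) < M), z k = j ⟨(k:ℕ), hk⟩
    · by_cases h2 : ∀ (k : Fin (M+1)) (hk : (k:ℕ) < M), z k = j' ⟨(k:ℕ), hk⟩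
      · exfalso
        apply hjj
        funext k0
        have hk0 : (k0 : ℕ) < M := k0.isLt
        have e1 := h1 ⟨(k0:ℕ), Nat.lt_succ_of_lt hk0⟩ hk0
        have e2 := h2 ⟨(k0:ℕ), Nat.lt_succ_of_lt hk0⟩ hk0
        rw [e1] at e2
        have : (⟨(k0:ℕ), hk0⟩ : Fin M) = k0 := Fin.eta k0 hk0
        rw [this] at e2
        exact e2
      · rw [if_neg h2, mul_zero, star_zero, mul_zero]
    · rw [if_neg h1, mul_zero, zero_mul]
  subst hjj
  -- common setup
  set jx : Fin (M+1) → Fin n := fun k =>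
    if h : (k:ℕ) < M then j ⟨(k:ℕ), h⟩ else i k with hjx
  have hjxlt : ∀ (k : Fin (M+1)) (hk : (k:ℕ) < M), jx k = j ⟨(k:ℕ), hk⟩ :=
    fun k hk => dif_pos hk
  have hiffind : ∀ z : Fin (M+1) → Fin n,
      (∀ (k : Fin (M+1)) (hk : (k:ℕ) < M), z k = j ⟨(k:ℕ), hk⟩) ↔
      (∀ (k : Fin (M+1)), (k:ℕ) < M → z k = jx k) := by
    intro z
    constructor
    · intro h k hk; rw [h k hk, hjxlt k hk]
    · intro h k hk; rw [← hjxlt k hk]; exact h k hk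
  have hindc : ∀ z : Fin (M+1) → Fin n,
      (if (∀ (k : Fin (M+1)) (hk : (k:ℕ) < M), z k = j ⟨(k:ℕ), hk⟩) then (1:ℂ) else 0) =
      (if (∀ (k : Fin (M+1)), (k:ℕ) < M → z k = jx k) then 1 else 0) :=
    fun z => iteC (hiffind z)
  simp_rw [hindc]
  have hre : ∀ z : Fin (M+1) → Fin n,
      (Hform n (M+1) r i M z * (if (∀ (k : Fin (M+1)), (k:ℕ) < M → z k = jx k) then 1 else 0)) *
      star (Hform n (M+1) r' i M z *
        (if (∀ (k : Fin (M+1)), (k:ℕ) < M → z k = jx k) then 1 else 0)) =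
      (Hform n (M+1) r i M z * star (Hform n (M+1) r' i M z)) *
        (if (∀ (k : Fin (M+1)), (k:ℕ) < M → z k = jx k) then 1 else 0) := by
    intro z
    rw [star_mul', star_ind]
    by_cases hc : ∀ (k : Fin (M+1)), (k:ℕ) < M → z k = jx k
    · rw [if_pos hc]; ring
    · rw [if_neg hc]; ring
  simp_rw [hre]
  have hDz : ∀ (r'' : Fin n) (z : Fin (M+1) → Fin n),
      (∀ (k : Fin (M+1)), (k:ℕ) < M → z k = jx k) →
      ∀ t, t ≤ M/2 → Dseq n (M+1) r'' i z t = Dseq n (M+1) r'' i jx t := by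
    intro r'' z hz t ht
    apply Dseq_congr
    intro s hs
    have h1 : 2*s+1 < M := by omega
    rw [izf_lt n _ _ (by omega), izf_lt n _ _ (by omega), hz _ h1]
  have hvac : ∀ (z : Fin (M+1) → Fin n),
      (if (∀ k : Fin (M+1), M < (k:ℕ) → z k = i k) then (1:ℂ) else 0) = 1 :=
    fun z => if_pos (fun k hk => absurd k.isLt (by omega))
  have hstarK : ∀ (u : ℕ) (w : ZMod n), star (((n:ℂ)⁻¹)^u * ec n w) =
      ((n:ℂ)⁻¹)^u * ec n (-w) := by
    intro u w
    rw [star_mul', star_ec, star_pow, star_inv₀, star_natCast]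
  have mul_star_ec : ∀ (K : ℂ) (E1 E2 tgt : ZMod n), E1 - E2 = tgt →
      (K * ec n E1) * (K * ec n (-E2)) = (K * K) * ec n tgt := by
    intro K E1 E2 tgt h
    rw [← h, sub_eq_add_neg, ec_add]
    ring
  rcases Nat.even_or_odd M with hpar | hpar
  · -- M even
    have he : M % 2 = 0 := Nat.even_iff.mp hpar
    set T := M / 2 with hT
    have hM2 : 2 * T = M := by omega
    set zh : Fin n → (Fin (M+1) → Fin n) := fun c k =>
      if (k:ℕ) < M then jx k else c with hzh
    have hzhlt : ∀ c (k : Fin (M+1)), (k:ℕ) < M → zh c k = jx k := by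
      intro c k hk; show (if (k:ℕ) < M then jx k else c) = jx k; rw [if_pos hk]
    have hzhM : ∀ c, zh c kM = c := by
      intro c; show (if M < M then jx kM else c) = c; rw [if_neg (lt_irrefl M)]
    have hinj : Function.Injective zh := by
      intro c d h; have := congrFun h kM; rwa [hzhM, hzhM] at this
    have h0 : ∀ z : Fin (M+1) → Fin n, (∀ c, z ≠ zh c) →
        (Hform n (M+1) r i M z * star (Hform n (M+1) r' i M z)) *
          (if (∀ (k : Fin (M+1)), (k:ℕ) < M → z k = jx k) then 1 else 0) = 0 := by
      intro z hz
      by_cases hc : ∀ (k : Fin (M+1)), (k:ℕ) < M → z k = jx k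
      · exfalso
        apply hz (z kM)
        funext k
        rcases (by omega : (k:ℕ) < M ∨ (k:ℕ) = M) with hk | hk
        · rw [hzhlt _ k hk]; exact hc k hk
        · have : k = kM := Fin.ext hk
          rw [this, hzhM]
      · rw [if_neg hc, mul_zero]
    rw [sum_collapse _ zh hinj h0]
    have hizflt : ∀ c, ∀ u, u < M → izf n (M+1) (zh c) u = izf n (M+1) jx u := by
      intro c u hu
      rw [izf_lt n _ _ (by omega), izf_lt n _ _ (by omega), hzhlt c _ hu]
    have hizfM : ∀ c, izf n (M+1) (zh c) M = fc n c := by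
      intro c
      rw [izf_lt n _ _ hM]
      exact congrArg _ (hzhM c)
    have hHr : ∀ (r'' : Fin n) (c : Fin n), Hform n (M+1) r'' i M (zh c) =
        ((n:ℂ)⁻¹)^(T+1) *
        ec n ((∑ t ∈ Finset.range T,
            (izf n (M+1) i (2*t) - izf n (M+1) jx (2*t)) * Dseq n (M+1) r'' i jx t) +
          (izf n (M+1) i M - fc n c) * Dseq n (M+1) r'' i jx T) := by
      intro r'' c
      rw [Hform, ← hT, hvac, if_pos (fun hh => absurd hh (by omega))]
      have hphase : ∑ t ∈ Finset.range (T+1),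
          (izf n (M+1) i (2*t) - izf n (M+1) (zh c) (2*t)) * Dseq n (M+1) r'' i (zh c) t =
          (∑ t ∈ Finset.range T,
            (izf n (M+1) i (2*t) - izf n (M+1) jx (2*t)) * Dseq n (M+1) r'' i jx t) +
          (izf n (M+1) i M - fc n c) * Dseq n (M+1) r'' i jx T := by
        rw [Finset.sum_range_succ]
        congr 1
        · apply Finset.sum_congr rfl
          intro t ht
          have ht' : t < T := Finset.mem_range.mp ht
          rw [hizflt c (2*t) (by omega), hDz r'' (zh c) (fun k hk => hzhlt c k hk) t (by omega)]
        · rw [hM2, hizfM, hDz r'' (zh c) (fun k hk => hzhlt c k hk) T (by omega)]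
      rw [hphase]
      ring
    have hindzh : ∀ c, (if (∀ (k : Fin (M+1)), (k:ℕ) < M → zh c k = jx k)
        then (1:ℂ) else 0) = 1 :=
      fun c => if_pos (fun k hk => hzhlt c k hk)
    have key : ∀ c : Fin n,
        (Hform n (M+1) r i M (zh c) * star (Hform n (M+1) r' i M (zh c))) *
          (if (∀ (k : Fin (M+1)), (k:ℕ) < M → zh c k = jx k) then 1 else 0) =
        (((n:ℂ)⁻¹)^(T+1) * ((n:ℂ)⁻¹)^(T+1)) *
          ec n (fc n c * (Dseq n (M+1) r' i jx T - Dseq n (M+1) r i jx T) +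
            ((∑ t ∈ Finset.range T,
              (izf n (M+1) i (2*t) - izf n (M+1) jx (2*t)) * Dseq n (M+1) r i jx t) -
             (∑ t ∈ Finset.range T,
              (izf n (M+1) i (2*t) - izf n (M+1) jx (2*t)) * Dseq n (M+1) r' i jx t) +
             izf n (M+1) i M * (Dseq n (M+1) r i jx T - Dseq n (M+1) r' i jx T))) := by
      intro c
      rw [hindzh c, mul_one, hHr r c, hHr r' c, hstarK (T+1) _]
      exact mul_star_ec _ _ _ _ (by ring)
    rw [Finset.sum_congr rfl (fun c _ => key c), ← Finset.mul_sum, sum_fc]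
    by_cases hrr : r = r'
    · subst hrr
      rw [if_pos (by ring), if_pos ⟨rfl, trivial⟩]
      rw [show ((∑ t ∈ Finset.range T,
              (izf n (M+1) i (2*t) - izf n (M+1) jx (2*t)) * Dseq n (M+1) r i jx t) -
             (∑ t ∈ Finset.range T,
              (izf n (M+1) i (2*t) - izf n (M+1) jx (2*t)) * Dseq n (M+1) r i jx t) +
             izf n (M+1) i M * (Dseq n (M+1) r i jx T - Dseq n (M+1) r i jx T)) = (0 : ZMod n)
        from by ring, ec_zero, mul_one]
      rw [← pow_add, show (T+1) + (T+1) = (M+1) + 1 from by omega, pow_succ, mul_assoc,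
        inv_mul_cancel₀ hn0, mul_one, inv_pow]
    · have hcond : ¬ (Dseq n (M+1) r' i jx T - Dseq n (M+1) r i jx T = 0) := by
        intro h
        exact hrr ((Dseq_inj n r r' i jx T).mp (by linear_combination -h))
      rw [if_neg hcond, if_neg (fun hc => hrr hc.1), mul_zero]
  · -- M odd
    have ho : M % 2 = 1 := Nat.odd_iff.mp hpar
    set T := M / 2 with hT
    have hM2 : 2 * T + 1 = M := by omega
    set zh : Fin (M+1) → Fin n := fun k =>
      if (k:ℕ) < M then jx k else fv n (izf n (M+1) i M + Dseq n (M+1) r i jx T) with hzh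
    have hzhlt : ∀ (k : Fin (M+1)), (k:ℕ) < M → zh k = jx k := by
      intro k hk; show (if (k:ℕ) < M then jx k else _) = jx k; rw [if_pos hk]
    have hzhM : zh kM = fv n (izf n (M+1) i M + Dseq n (M+1) r i jx T) := by
      show (if M < M then jx kM else _) = _; rw [if_neg (lt_irrefl M)]
    have hizfMzh : izf n (M+1) zh M = izf n (M+1) i M + Dseq n (M+1) r i jx T := by
      rw [izf_lt n _ _ hM]
      rw [show (⟨M, hM⟩ : Fin (M+1)) = kM from rfl, hzhM, fc_fv]
    have h0 : ∀ z : Fin (M+1) → Fin n, z ≠ zh →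
        (Hform n (M+1) r i M z * star (Hform n (M+1) r' i M z)) *
          (if (∀ (k : Fin (M+1)), (k:ℕ) < M → z k = jx k) then 1 else 0) = 0 := by
      intro z hz
      by_cases hc : ∀ (k : Fin (M+1)), (k:ℕ) < M → z k = jx k
      · by_cases h3 : izf n (M+1) z M = izf n (M+1) i M + Dseq n (M+1) r i z T
        · exfalso
          apply hz
          funext k
          rcases (by omega : (k:ℕ) < M ∨ (k:ℕ) = M) with hk | hk
          · rw [hzhlt k hk]; exact hc k hk
          · have hkk : k = kM := Fin.ext hk
            rw [hkk, hzhM]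
            have h4 : fc n (z kM) = izf n (M+1) i M + Dseq n (M+1) r i jx T := by
              rw [← izf_lt n z M hM, h3, hDz r z hc T (by omega)]
            exact (fc_cond_iff n _ _).mp h4
        · rw [Hform, ← hT, if_neg (fun himp => h3 (himp ho))]
          ring
      · rw [if_neg hc, mul_zero]
    rw [Fintype.sum_eq_single zh (fun z hz => h0 z hz)]
    rw [if_pos (fun k hk => hzhlt k hk), mul_one]
    have hDzh : ∀ r'', Dseq n (M+1) r'' i zh T = Dseq n (M+1) r'' i jx T :=
      fun r'' => hDz r'' zh (fun k hk => hzhlt k hk) T (by omega)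
    by_cases hrr : r = r'
    · subst hrr
      rw [if_pos ⟨rfl, trivial⟩]
      rw [Hform, ← hT, hvac, if_pos (fun _ => by rw [hizfMzh, hDzh])]
      simp only [mul_one]
      rw [hstarK (T+1) _, mul_star_ec _ _ _ 0 (by ring), ec_zero, mul_one]
      rw [← pow_add, show (T+1) + (T+1) = M+1 from by omega, inv_pow]
    · rw [if_neg (fun hc => hrr hc.1)]
      have hz0 : Hform n (M+1) r' i M zh = 0 := by
        rw [Hform, ← hT]
        rw [if_neg (fun himp => ?_)]
        · ring
        · have h5 := himp ho
          rw [hizfMzh, hDzh r'] at h5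
          exact hrr ((Dseq_inj n r r' i jx T).mp (by linear_combination h5))
      rw [hz0, star_zero, mul_zero]


lemma trace_Y {M : ℕ} (i i' : Fin (M+1) → Fin n) (r r' : Fin n) (j j' : Fin M → Fin n) :
    Matrix.trace ((EM n (M+1) (M+1) i * FM n (M+1) r *
        (UM n (M+1) M * EM n (M+1) M j * (UM n (M+1) M)ᴴ)) *
      (EM n (M+1) (M+1) i' * FM n (M+1) r' *
        (UM n (M+1) M * EM n (M+1) M j' * (UM n (M+1) M)ᴴ))ᴴ) =
    if i = i' ∧ r = r' ∧ j = j' then ((n:ℂ)^(M+1))⁻¹ else 0 := by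
  have hM : M < M + 1 := Nat.lt_succ_self M
  have hm0 : 0 < M + 1 := Nat.succ_pos M
  have hY : ∀ (i0 : Fin (M+1) → Fin n) (r0 : Fin n) (j0 : Fin M → Fin n)
      (x y : Fin (M+1) → Fin n),
      (EM n (M+1) (M+1) i0 * FM n (M+1) r0 *
        (UM n (M+1) M * EM n (M+1) M j0 * (UM n (M+1) M)ᴴ)) x y =
      (if x = i0 then 1 else 0) *
        vecMul (fun z => Hform n (M+1) r0 i0 M z *
          (if (∀ (k : Fin (M+1)) (hk : (k:ℕ) < M), z k = j0 ⟨(k:ℕ), hk⟩) then 1 else 0))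
          (UM n (M+1) M)ᴴ y := by
    intro i0 r0 j0 x y
    rw [Matrix.mul_apply]
    simp_rw [EMFM_apply n hm0 i0 r0 x]
    have hassoc : ∀ z, ((if x = i0 then (1:ℂ) else 0) * Hform n (M+1) r0 i0 0 z) *
        (UM n (M+1) M * EM n (M+1) M j0 * (UM n (M+1) M)ᴴ) z y =
        (if x = i0 then (1:ℂ) else 0) * (Hform n (M+1) r0 i0 0 z *
        (UM n (M+1) M * EM n (M+1) M j0 * (UM n (M+1) M)ᴴ) z y) := fun z => by ring
    simp_rw [hassoc]
    rw [← Finset.mul_sum]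
    congr 1
    have h2 : (∑ z, Hform n (M+1) r0 i0 0 z *
        (UM n (M+1) M * EM n (M+1) M j0 * (UM n (M+1) M)ᴴ) z y) =
        vecMul (Hform n (M+1) r0 i0 0)
          (UM n (M+1) M * EM n (M+1) M j0 * (UM n (M+1) M)ᴴ) y := rfl
    rw [h2, ← Matrix.vecMul_vecMul, ← Matrix.vecMul_vecMul, H_eq n r0 i0 M hM]
    congr 1
    funext z
    exact vecMul_EM n M j0 _ z
  rw [tr_conj]
  simp_rw [hY]
  have hsplit : ∀ x y : Fin (M+1) → Fin n,
      ((if x = i then (1:ℂ) else 0) *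
        vecMul (fun z => Hform n (M+1) r i M z *
          (if (∀ (k : Fin (M+1)) (hk : (k:ℕ) < M), z k = j ⟨(k:ℕ), hk⟩) then 1 else 0))
          (UM n (M+1) M)ᴴ y) *
      star ((if x = i' then (1:ℂ) else 0) *
        vecMul (fun z => Hform n (M+1) r' i' M z *
          (if (∀ (k : Fin (M+1)) (hk : (k:ℕ) < M), z k = j' ⟨(k:ℕ), hk⟩) then 1 else 0))
          (UM n (M+1) M)ᴴ y) =
      ((if x = i then (1:ℂ) else 0) * (if x = i' then 1 else 0)) *
        (vecMul (fun z => Hform n (M+1) r i M z *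
          (if (∀ (k : Fin (M+1)) (hk : (k:ℕ) < M), z k = j ⟨(k:ℕ), hk⟩) then 1 else 0))
          (UM n (M+1) M)ᴴ y *
        star (vecMul (fun z => Hform n (M+1) r' i' M z *
          (if (∀ (k : Fin (M+1)) (hk : (k:ℕ) < M), z k = j' ⟨(k:ℕ), hk⟩) then 1 else 0))
          (UM n (M+1) M)ᴴ y)) := by
    intro x y
    rw [star_mul', star_ind]
    ring
  simp_rw [hsplit]
  rw [← Finset.sum_mul_sum]
  rw [sum_delta_pair]
  rw [pairing_cancel (UM n (M+1) M) (UM_unitary n M hM)]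
  by_cases hii : i = i'
  · subst hii
    rw [if_pos rfl, one_mul]
    rw [final_pairing n r r' i j j']
    apply iteC
    constructor
    · intro h; exact ⟨rfl, h⟩
    · intro h; exact h.2
  · rw [if_neg hii, zero_mul, if_neg (fun hc => hii hc.1)]

end Core

end St3

/-- inside the `m`-fold tensor power `M_n(ℂ)^{⊗m}` (with `m ≥ 1`), the
`n^{2m}` matrices `Y(i,r,j) = Ē(i) F_r (U_{m-1} E′(j) U_{m-1}ᴴ)`, for `i ∈ (Fin n)^m`,
`r ∈ Fin n`, `j ∈ (Fin n)^{m-1}`, are nonzero, pairwise orthogonal for the trace inner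
product `⟨X, Y⟩ = τ(X Yᴴ)`, and form a `ℂ`-basis: they are linearly independent and span. -/
theorem statement3 (n : ℕ) [NeZero n] (hn : 2 ≤ n) (m : ℕ) (hm : 1 ≤ m) :
    let Y : (Fin m → Fin n) → Fin n → (Fin (m - 1) → Fin n) →
        Matrix (Fin m → Fin n) (Fin m → Fin n) ℂ :=
      fun i r j => EM n m m i * FM n m r *
        (UM n m (m - 1) * EM n m (m - 1) j * (UM n m (m - 1))ᴴ)
    (∀ (i : Fin m → Fin n) (r : Fin n) (j : Fin (m - 1) → Fin n), Y i r j ≠ 0) ∧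
      (∀ p q : (Fin m → Fin n) × Fin n × (Fin (m - 1) → Fin n), p ≠ q →
        nτ (Y p.1 p.2.1 p.2.2 * (Y q.1 q.2.1 q.2.2)ᴴ) = 0) ∧
      LinearIndependent ℂ
        (fun p : (Fin m → Fin n) × Fin n × (Fin (m - 1) → Fin n) => Y p.1 p.2.1 p.2.2) ∧
      Submodule.span ℂ
          (Set.range fun p : (Fin m → Fin n) × Fin n × (Fin (m - 1) → Fin n) =>
            Y p.1 p.2.1 p.2.2) = ⊤ := by
  obtain ⟨M, rfl⟩ : ∃ M, m = M + 1 := ⟨m - 1, by omega⟩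
  intro Y
  have hYdef : ∀ i r j, Y i r j = EM n (M+1) (M+1) i * FM n (M+1) r *
      (UM n (M+1) M * EM n (M+1) M j * (UM n (M+1) M)ᴴ) := fun _ _ _ => rfl
  have hn0 : (n:ℂ) ≠ 0 := Nat.cast_ne_zero.mpr (NeZero.ne n)
  have hC0 : ((n:ℂ)^(M+1))⁻¹ ≠ 0 := inv_ne_zero (pow_ne_zero _ hn0)
  have master : ∀ p q : (Fin (M+1) → Fin n) × Fin n × (Fin (M+1-1) → Fin n),
      Matrix.trace (Y p.1 p.2.1 p.2.2 * (Y q.1 q.2.1 q.2.2)ᴴ) =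
      if p = q then ((n:ℂ)^(M+1))⁻¹ else 0 := by
    intro p q
    rw [hYdef, hYdef, St3.trace_Y n p.1 q.1 p.2.1 q.2.1 p.2.2 q.2.2]
    apply St3.iteC
    constructor
    · rintro ⟨h1, h2, h3⟩; exact Prod.ext h1 (Prod.ext h2 h3)
    · rintro rfl; exact ⟨rfl, rfl, rfl⟩
  have hli : LinearIndependent ℂ
      (fun p : (Fin (M+1) → Fin n) × Fin n × (Fin (M+1-1) → Fin n) =>
        Y p.1 p.2.1 p.2.2) := by
    rw [Fintype.linearIndependent_iff]
    intro g hg q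
    have h1 : Matrix.trace ((∑ p, g p • Y p.1 p.2.1 p.2.2) * (Y q.1 q.2.1 q.2.2)ᴴ) = 0 := by
      rw [hg, Matrix.zero_mul, Matrix.trace_zero]
    rw [Matrix.sum_mul] at h1
    simp_rw [Matrix.smul_mul] at h1
    rw [Matrix.trace_sum] at h1
    simp_rw [Matrix.trace_smul, master, smul_eq_mul, mul_ite, mul_zero] at h1
    rw [Finset.sum_ite_eq' Finset.univ q, if_pos (Finset.mem_univ q)] at h1
    exact (mul_eq_zero.mp h1).resolve_right hC0
  refine ⟨?_, ?_, hli, ?_⟩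
  · intro i r j hzero
    have h := master (i,r,j) (i,r,j)
    rw [if_pos rfl, hzero, Matrix.zero_mul, Matrix.trace_zero] at h
    exact hC0 h.symm
  · intro p q hpq
    rw [nτ, master p q, if_neg hpq, zero_div]
  · haveI : Nonempty (Fin n) := ⟨⟨0, Nat.pos_of_ne_zero (NeZero.ne n)⟩⟩
    apply hli.span_eq_top_of_card_eq_finrank
    rw [Module.finrank_matrix]
    simp only [Fintype.card_prod, Fintype.card_fun, Fintype.card_fin, Module.finrank_self,
      Nat.add_sub_cancel, mul_one]
    rw [show n ^ (M+1) = n * n ^ M from by rw [pow_succ]; ring]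
    try ring
end
end

section
/- Let p, q ≥ 1 and let A ⊆ M_p(ℂ) and B ⊆ M_q(ℂ) be unital subalgebras. Inside M_p(ℂ) ⊗ M_q(ℂ), realized as the algebra of complex matrices indexed by Fin p × Fin q via the Kronecker product, the centralizer of the subalgebra generated by { a ⊗ₖ b : a ∈ A, b ∈ B } equals the subalgebra generated by { a′ ⊗ₖ b′ : a′ ∈ centralizer(A), b′ ∈ centralizer(B) }, where centralizer(A) is taken in M_p(ℂ) and centralizer(B) in M_q(ℂ). -/
/-!
Cut `x : Matrix (m × n) (m × n) K` into the blocks `X i j : Matrix n n K`,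
`X i j k l = x (i, k) (j, l)`. Commuting with every `1 ⊗ₖ b` puts each block in the
centralizer `B'` of `B`. Pick a basis `(b s)` of `B'` and extend its coordinate functionals
to linear maps `f s` on all of `Matrix n n K`; then `x = ∑ s, X.map (f s) ⊗ₖ b s`. Applying
a linear functional blockwise intertwines multiplication by `a ⊗ₖ 1` with multiplication
by `a`, so commuting with every `a ⊗ₖ 1` puts each `X.map (f s)` in the centralizer of `A`.
The reverse inclusion is the mixed-product rule.
-/

open Matrix Kronecker

theorem Subalgebra.centralizer_adjoin {R A : Type*} [CommSemiring R] [Semiring A] [Algebra R A]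
    (s : Set A) : centralizer R (Algebra.adjoin R s : Set A) = centralizer R s := by
  refine le_antisymm (centralizer_le _ _ _ Algebra.subset_adjoin) fun z hz => ?_
  have hadj : Algebra.adjoin R s ≤ centralizer R {z} :=
    Algebra.adjoin_le fun g hg => by
      simpa [mem_centralizer_iff, Set.mem_centralizer_iff] using
        ((mem_centralizer_iff R).1 hz g hg).symm
  exact (mem_centralizer_iff R).2 fun g hg =>
    ((mem_centralizer_iff R).1 (hadj hg) z rfl).symm

theorem Submodule.exists_sum_coord_smul_eq {K M : Type*} [DivisionRing K] [AddCommGroup M]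
    [Module K M] (V : Submodule K M) [FiniteDimensional K V] :
    ∃ (b : Fin (Module.finrank K V) → V) (f : Fin (Module.finrank K V) → M →ₗ[K] K),
      ∀ v : V, ∑ s, f s v • (b s : M) = v := by
  let e := Module.finBasis K V
  choose f hf using fun s => LinearMap.exists_extend (e.coord s)
  refine ⟨e, f, fun v => ?_⟩
  have hfv : ∀ s, f s v = e.repr v s := fun s => LinearMap.congr_fun (hf s) v
  simp_rw [hfv]
  exact_mod_cast congrArg Subtype.val (e.sum_repr v)

namespace Matrix

variable {R : Type*} [CommSemiring R] {m n : Type*}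

theorem comp_symm_kronecker_one_mul [Fintype m] [Fintype n] [DecidableEq n] (a : Matrix m m R)
    (x : Matrix (m × n) (m × n) R) (i j : m) :
    (comp m m n n R).symm ((a ⊗ₖ (1 : Matrix n n R)) * x) i j =
      ∑ k, a i k • (comp m m n n R).symm x k j := by
  ext k l
  simp [mul_apply, Fintype.sum_prod_type, one_apply, sum_apply]

theorem comp_symm_mul_kronecker_one [Fintype m] [Fintype n] [DecidableEq n] (a : Matrix m m R)
    (x : Matrix (m × n) (m × n) R) (i j : m) :
    (comp m m n n R).symm (x * (a ⊗ₖ (1 : Matrix n n R))) i j =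
      ∑ k, a k j • (comp m m n n R).symm x i k := by
  ext k l
  simp [mul_apply, Fintype.sum_prod_type, one_apply, sum_apply, mul_comm]

theorem comp_symm_one_kronecker_mul [Fintype m] [Fintype n] [DecidableEq m] (b : Matrix n n R)
    (x : Matrix (m × n) (m × n) R) (i j : m) :
    (comp m m n n R).symm (((1 : Matrix m m R) ⊗ₖ b) * x) i j =
      b * (comp m m n n R).symm x i j := by
  ext k l
  simp [mul_apply, Fintype.sum_prod_type_right, one_apply]

theorem comp_symm_mul_one_kronecker [Fintype m] [Fintype n] [DecidableEq m] (b : Matrix n n R)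
    (x : Matrix (m × n) (m × n) R) (i j : m) :
    (comp m m n n R).symm (x * ((1 : Matrix m m R) ⊗ₖ b)) i j =
      (comp m m n n R).symm x i j * b := by
  ext k l
  simp [mul_apply, Fintype.sum_prod_type_right, one_apply]

theorem commute_map_comp_symm_of_commute_kronecker_one [Fintype m] [Fintype n] [DecidableEq n]
    {a : Matrix m m R} {x : Matrix (m × n) (m × n) R} (h : Commute (a ⊗ₖ (1 : Matrix n n R)) x)
    (f : Matrix n n R →ₗ[R] R) : Commute a (((comp m m n n R).symm x).map f) := by
  ext i j
  have hij := congrArg (fun y => f ((comp m m n n R).symm y i j)) h.eq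
  simpa [comp_symm_kronecker_one_mul, comp_symm_mul_kronecker_one, mul_apply, mul_comm]
    using hij

theorem comp_symm_mem_centralizer [Fintype m] [Fintype n] [DecidableEq m] [DecidableEq n]
    {T : Set (Matrix n n R)} {x : Matrix (m × n) (m × n) R}
    (h : ∀ b ∈ T, Commute ((1 : Matrix m m R) ⊗ₖ b) x)
    (i j : m) : (comp m m n n R).symm x i j ∈ Subalgebra.centralizer R T :=
  (Subalgebra.mem_centralizer_iff R).2 fun b hb => by
    simpa [comp_symm_one_kronecker_mul, comp_symm_mul_one_kronecker] using
      congrArg (fun y => (comp m m n n R).symm y i j) (h b hb).eq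

theorem eq_sum_kronecker_map_comp_symm {ι : Type*} [Fintype ι] (b : ι → Matrix n n R)
    (f : ι → Matrix n n R →ₗ[R] R) (x : Matrix (m × n) (m × n) R)
    (hx : ∀ i j, ∑ s, f s ((comp m m n n R).symm x i j) • b s = (comp m m n n R).symm x i j) :
    x = ∑ s, ((comp m m n n R).symm x).map (f s) ⊗ₖ b s := by
  ext ⟨i, k⟩ ⟨j, l⟩
  simpa [sum_apply] using (congrFun (congrFun (hx i j) k) l).symm

end Matrix

section

variable {K : Type*} [Field K] {m n : Type*} [Fintype m] [Fintype n] [DecidableEq m]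
  [DecidableEq n] {S : Set (Matrix m m K)} {T : Set (Matrix n n K)}

open Subalgebra

theorem adjoin_kronecker_centralizer_le_centralizer :
    Algebra.adjoin K {x | ∃ a' ∈ centralizer K S, ∃ b' ∈ centralizer K T, x = a' ⊗ₖ b'} ≤
      centralizer K {x | ∃ a ∈ S, ∃ b ∈ T, x = a ⊗ₖ b} := by
  refine Algebra.adjoin_le ?_
  rintro _ ⟨a', ha', b', hb', rfl⟩
  refine (mem_centralizer_iff K).2 ?_
  rintro _ ⟨a, ha, b, hb, rfl⟩
  rw [← mul_kronecker_mul, ← mul_kronecker_mul, (mem_centralizer_iff K).1 ha' a ha,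
    (mem_centralizer_iff K).1 hb' b hb]

theorem centralizer_kronecker_le_adjoin (hS : 1 ∈ S) (hT : 1 ∈ T) :
    centralizer K {x | ∃ a ∈ S, ∃ b ∈ T, x = a ⊗ₖ b} ≤
      Algebra.adjoin K {x | ∃ a' ∈ centralizer K S, ∃ b' ∈ centralizer K T, x = a' ⊗ₖ b'} := by
  intro x hx
  have hcomm : ∀ a ∈ S, ∀ b ∈ T, Commute (a ⊗ₖ b) x := fun a ha b hb =>
    (mem_centralizer_iff K).1 hx _ ⟨a, ha, b, hb, rfl⟩
  obtain ⟨b', f, hb'f⟩ := (toSubmodule (centralizer K T)).exists_sum_coord_smul_eq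
  have hslice := comp_symm_mem_centralizer fun b hb => hcomm 1 hS b hb
  rw [eq_sum_kronecker_map_comp_symm (fun s => b' s) f x fun i j => hb'f ⟨_, hslice i j⟩]
  refine Subalgebra.sum_mem _ fun s _ => Algebra.subset_adjoin ⟨_, ?_, b' s, (b' s).2, rfl⟩
  exact (mem_centralizer_iff K).2 fun a ha =>
    (commute_map_comp_symm_of_commute_kronecker_one (hcomm a ha 1 hT) (f s)).eq

theorem centralizer_kronecker (hS : 1 ∈ S) (hT : 1 ∈ T) :
    centralizer K {x | ∃ a ∈ S, ∃ b ∈ T, x = a ⊗ₖ b} =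
      Algebra.adjoin K {x | ∃ a' ∈ centralizer K S, ∃ b' ∈ centralizer K T, x = a' ⊗ₖ b'} :=
  le_antisymm (centralizer_kronecker_le_adjoin hS hT) adjoin_kronecker_centralizer_le_centralizer

end

theorem statement5_general (p q : ℕ)
    (A : Subalgebra ℂ (Matrix (Fin p) (Fin p) ℂ))
    (B : Subalgebra ℂ (Matrix (Fin q) (Fin q) ℂ)) :
    Subalgebra.centralizer ℂ
        ((Algebra.adjoin ℂ
            {x : Matrix (Fin p × Fin q) (Fin p × Fin q) ℂ |
              ∃ a ∈ A, ∃ b ∈ B, x = a ⊗ₖ b} :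
          Subalgebra ℂ (Matrix (Fin p × Fin q) (Fin p × Fin q) ℂ)) :
          Set (Matrix (Fin p × Fin q) (Fin p × Fin q) ℂ)) =
      Algebra.adjoin ℂ
        {x : Matrix (Fin p × Fin q) (Fin p × Fin q) ℂ |
          ∃ a' ∈ Subalgebra.centralizer ℂ (A : Set (Matrix (Fin p) (Fin p) ℂ)),
            ∃ b' ∈ Subalgebra.centralizer ℂ (B : Set (Matrix (Fin q) (Fin q) ℂ)),
              x = a' ⊗ₖ b'} := by
  rw [Subalgebra.centralizer_adjoin]
  exact centralizer_kronecker A.one_mem B.one_mem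

/-- the finite-dimensional commutation theorem for tensor products: inside
`M_p(ℂ) ⊗ M_q(ℂ)` realized via the Kronecker product, the centralizer of the subalgebra
generated by `{a ⊗ₖ b : a ∈ A, b ∈ B}` is the subalgebra generated by the Kronecker
products of the centralizers. -/
theorem statement5 (p q : ℕ) (hp : 1 ≤ p) (hq : 1 ≤ q)
    (A : Subalgebra ℂ (Matrix (Fin p) (Fin p) ℂ))
    (B : Subalgebra ℂ (Matrix (Fin q) (Fin q) ℂ)) :
    Subalgebra.centralizer ℂ
        ((Algebra.adjoin ℂ
            {x : Matrix (Fin p × Fin q) (Fin p × Fin q) ℂ |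
              ∃ a ∈ A, ∃ b ∈ B, x = a ⊗ₖ b} :
          Subalgebra ℂ (Matrix (Fin p × Fin q) (Fin p × Fin q) ℂ)) :
          Set (Matrix (Fin p × Fin q) (Fin p × Fin q) ℂ)) =
      Algebra.adjoin ℂ
        {x : Matrix (Fin p × Fin q) (Fin p × Fin q) ℂ |
          ∃ a' ∈ Subalgebra.centralizer ℂ (A : Set (Matrix (Fin p) (Fin p) ℂ)),
            ∃ b' ∈ Subalgebra.centralizer ℂ (B : Set (Matrix (Fin q) (Fin q) ℂ)),
              x = a' ⊗ₖ b'} :=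
  statement5_general p q A B
end
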